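/- arXiv:2502.18222 — 7 statements merged into one kernel-verified Lean document; each statement's English description precedes it below -/
import Mathlib

section
/- Let k be a field, Z = {z_1,…,z_N} variables, I = (p_1,…,p_s) a proper ideal of k[Z]. For a subset T ⊆ [N], let I_T denote the ideal of k[Z_T] generated by those generators p_i lying in k[Z_T] (polynomials only involving variables indexed by T). If there exists T ⊆ [N] with height(I_T) > |T \ Ω| for some Ω ⊆ [N], then the elimination ideal I ∩ k[Z_Ω] is nonzero. -/
open MvPolynomial

/-- The height of an ideal: the infimum of the heights of the prime ideals containing it. -/
noncomputable def idealHeight {R : Type*} [CommRing R] (I : Ideal R) : ℕ∞ :=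
  ⨅ (P : PrimeSpectrum R) (_ : I ≤ P.asIdeal), Order.height P


lemma myDep {B : Type*} [CommRing B] [IsDomain B] {σ : Type*} [Fintype σ] (c : ℕ)
    (hσ : Fintype.card σ ≤ c) (f : Fin (c + 1) → MvPolynomial σ B) :
    ∃ Q : MvPolynomial (Fin (c + 1)) B, Q ≠ 0 ∧ aeval f Q = 0 := by
  classical
  set D := Finset.univ.sup fun i => (f i).totalDegree with hD
  set d := ((c + 1) * D + 1) ^ c with hd
  set M := (c + 1) * d * D with hM
  have hd1 : 1 ≤ d := Nat.one_le_pow _ _ (by omega)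
  set v : (Fin (c + 1) → Fin (d + 1)) → MvPolynomial σ B := fun e => ∏ i, f i ^ (e i : ℕ) with hv
  have hvmem : ∀ e, v e ∈ restrictTotalDegree σ B M := by
    intro e
    rw [mem_restrictTotalDegree]
    calc (∏ i, f i ^ (e i : ℕ)).totalDegree
        ≤ ∑ i, (f i ^ (e i : ℕ)).totalDegree := totalDegree_finset_prod _ _
      _ ≤ ∑ _i : Fin (c + 1), d * D := by
          refine Finset.sum_le_sum fun i _ => ?_
          refine le_trans (totalDegree_pow _ _) ?_
          exact Nat.mul_le_mul (Fin.is_le _) (Finset.le_sup (f := fun i => (f i).totalDegree) (Finset.mem_univ i))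
      _ = (c + 1) * (d * D) := by simp [Finset.sum_const, Finset.card_univ, mul_comm]
      _ = M := by rw [hM]; ring
  have hnotli : ¬ LinearIndependent B v := by
    intro hli
    have hli' : LinearIndependent B
        (fun e => (⟨v e, hvmem e⟩ : restrictTotalDegree σ B M)) := by
      refine LinearIndependent.of_comp (Submodule.subtype _) ?_
      exact hli
    have hfin := hli'.fintype_card_le_finrank
    -- compute finrank
    have hfinite : Finite {m : σ →₀ ℕ | (m.sum fun _ e => e) ≤ M} := by
      have h1 : Finite {m : σ →₀ ℕ | ∀ a, m a ≤ M} :=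
        ((Set.Finite.pi' fun _ ↦ Set.finite_le_nat _).preimage
          DFunLike.coe_injective.injOn).to_subtype
      rw [Set.finite_coe_iff] at h1 ⊢
      exact h1.subset fun m hm i ↦ (eq_or_ne (m i) 0).elim
        (fun h ↦ h.trans_le M.zero_le) fun h ↦
          (Finset.single_le_sum (fun _ _ ↦ Nat.zero_le _) <|
            Finsupp.mem_support_iff.mpr h).trans hm
    have : Fintype {m : σ →₀ ℕ | (m.sum fun _ e => e) ≤ M} := Fintype.ofFinite _
    have hrank : Module.finrank B (restrictTotalDegree σ B M) =
        Fintype.card {m : σ →₀ ℕ | (m.sum fun _ e => e) ≤ M} :=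
      Module.finrank_eq_card_basis (basisRestrictSupport B _)
    have hcards : Fintype.card {m : σ →₀ ℕ | (m.sum fun _ e => e) ≤ M}
        ≤ (M + 1) ^ Fintype.card σ := by
      have : Fintype.card {m : σ →₀ ℕ | (m.sum fun _ e => e) ≤ M}
          ≤ Fintype.card (σ → Fin (M + 1)) := by
        refine Fintype.card_le_of_injective
          (fun m => fun i => ⟨m.1 i, Nat.lt_succ_of_le ?_⟩) ?_
        · refine le_trans ?_ m.2
          exact (eq_or_ne (m.1 i) 0).elim (fun h ↦ h.trans_le (Nat.zero_le _)) fun h ↦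
            Finset.single_le_sum (fun _ _ ↦ Nat.zero_le _) (Finsupp.mem_support_iff.mpr h)
        · intro a b hab
          ext i
          exact congrArg Fin.val (congrFun hab i)
      simpa [Fintype.card_fun] using this
    have hbig : Fintype.card (Fin (c + 1) → Fin (d + 1)) = (d + 1) ^ (c + 1) := by
      simp [Fintype.card_fun]
    have hnum : (M + 1) ^ Fintype.card σ < (d + 1) ^ (c + 1) := by
      calc (M + 1) ^ Fintype.card σ ≤ (M + 1) ^ c :=
            Nat.pow_le_pow_right (by omega) hσ
        _ ≤ (d * ((c + 1) * D + 1)) ^ c := by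
            refine Nat.pow_le_pow_left ?_ _
            calc M + 1 ≤ M + d := by omega
              _ = d * ((c + 1) * D + 1) := by rw [hM]; ring
        _ = d ^ c * d := by rw [mul_pow, ← hd]
        _ = d ^ (c + 1) := by rw [pow_succ]
        _ < (d + 1) ^ (c + 1) := Nat.pow_lt_pow_left (by omega) (by omega)
    rw [hrank] at hfin
    omega
  rw [Fintype.not_linearIndependent_iff] at hnotli
  obtain ⟨g, hsum, e₀, hg0⟩ := hnotli
  set mof : (Fin (c + 1) → Fin (d + 1)) → (Fin (c + 1) →₀ ℕ) :=
    fun e => Finsupp.equivFunOnFinite.symm fun i => (e i : ℕ) with hmofdef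
  have hmofapp : ∀ e i, mof e i = e i := fun e i => rfl
  have hmof : Function.Injective mof := by
    intro a b hab
    funext i
    have := congrArg (fun m => m i) hab
    simpa [hmofapp, Fin.val_inj] using this
  refine ⟨∑ e, monomial (mof e) (g e), ?_, ?_⟩
  · intro hQ
    apply hg0
    have := congrArg (coeff (mof e₀)) hQ
    rw [coeff_sum, coeff_zero] at this
    rw [← this]
    rw [Finset.sum_eq_single e₀]
    · simp [coeff_monomial]
    · intro e _ hne
      rw [coeff_monomial, if_neg (fun hc => hne (hmof hc))]
    · intro he; exact absurd (Finset.mem_univ _) he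
  · rw [map_sum]
    have heval : ∀ e, aeval f (monomial (mof e) (g e)) = g e • v e := by
      intro e
      rw [aeval_monomial, Algebra.smul_def]
      congr 1
      rw [Finsupp.prod_fintype]
      · rfl
      · intro i; exact pow_zero _
    exact (Finset.sum_congr rfl fun e _ => heval e).trans hsum


lemma myAevalFinSucc {B R : Type*} [CommRing B] [CommRing R] [Algebra B R]
    {n : ℕ} (f : Fin (n + 1) → R) (Q : MvPolynomial (Fin (n + 1)) B) :
    aeval f Q = Polynomial.eval₂
      ((aeval (fun i : Fin n => f i.succ) : MvPolynomial (Fin n) B →ₐ[B] R) : MvPolynomial (Fin n) B →+* R)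
      (f 0) (finSuccEquiv B n Q) := by
  have key : ((aeval f : MvPolynomial (Fin (n + 1)) B →ₐ[B] R) : MvPolynomial (Fin (n + 1)) B →+* R) =
      (Polynomial.eval₂RingHom
        ((aeval (fun i : Fin n => f i.succ) : MvPolynomial (Fin n) B →ₐ[B] R) : MvPolynomial (Fin n) B →+* R)
        (f 0)).comp
        (finSuccEquiv B n : MvPolynomial (Fin (n + 1)) B →+* Polynomial (MvPolynomial (Fin n) B)) := by
    apply ringHom_ext
    · intro b
      simp [finSuccEquiv_apply]
    · intro i
      refine Fin.cases ?_ ?_ i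
      · simp [finSuccEquiv_X_zero]
      · intro j
        simp [finSuccEquiv_X_succ]
  exact DFunLike.congr_fun key Q

lemma myChain {B R : Type*} [CommRing B] [CommRing R] [Algebra B R] :
    ∀ (n : ℕ) (q : Fin (n + 1) → Ideal R), (∀ j, (q j).IsPrime) →
      (∀ j : Fin n, q j.castSucc ≤ q j.succ) →
      ∀ f : Fin n → R, (∀ j, f j ∈ q j.succ) → (∀ j, f j ∉ q j.castSucc) →
      ∀ Q : MvPolynomial (Fin n) B, Q ≠ 0 → aeval f Q ∈ q 0 →
      ∃ b : B, b ≠ 0 ∧ algebraMap B R b ∈ q (Fin.last n) := by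
  intro n
  induction n with
  | zero =>
    intro q _ _ f _ _ Q hQ heval
    obtain ⟨b, rfl⟩ := (MvPolynomial.isEmptyRingEquiv B (Fin 0)).symm.surjective Q
    have hb : b ≠ 0 := by
      intro hb
      exact hQ (by rw [hb, map_zero])
    refine ⟨b, hb, ?_⟩
    have : (MvPolynomial.isEmptyRingEquiv B (Fin 0)).symm b = C b := rfl
    rw [this] at heval
    rw [aeval_C] at heval
    exact heval
  | succ n ih =>
    intro q hprime hchain f hmem hnmem Q hQ heval
    set φ : MvPolynomial (Fin n) B →+* R :=
      ((aeval (fun i : Fin n => f i.succ) : MvPolynomial (Fin n) B →ₐ[B] R) : MvPolynomial (Fin n) B →+* R) with hφ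
    have hkey := myAevalFinSucc f Q
    have hPne : finSuccEquiv B n Q ≠ 0 := by
      intro h
      exact hQ ((map_eq_zero_iff _ (finSuccEquiv B n).injective).mp h)
    have h00 : f 0 ∉ q 0 := by
      have := hnmem 0
      simpa using this
    have h0mem : f 0 ∈ q 1 := by
      have := hmem 0
      simpa using this
    have h01 : q 0 ≤ q 1 := by
      have := hchain 0
      simpa using this
    have inner : ∀ (m : ℕ) (P : Polynomial (MvPolynomial (Fin n) B)), P.natDegree = m → P ≠ 0 →
        Polynomial.eval₂ φ (f 0) P ∈ q 0 →
        ∃ b : B, b ≠ 0 ∧ algebraMap B R b ∈ q (Fin.last (n + 1)) := by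
      intro m
      induction m using Nat.strong_induction_on with
      | _ m ihm =>
        intro P hdeg hne hev
        by_cases h0 : P.coeff 0 = 0
        · have hfac : Polynomial.X * P.divX = P := by
            conv_rhs => rw [← Polynomial.X_mul_divX_add P]
            rw [h0, map_zero, add_zero]
          have hdvx : P.divX ≠ 0 := by
            intro hd
            apply hne
            rw [← hfac, hd, mul_zero]
          have hmne : P.natDegree ≠ 0 := by
            intro hdz
            apply hne
            rw [Polynomial.eq_C_of_natDegree_le_zero hdz.le, h0, map_zero]
          have hev' : f 0 * Polynomial.eval₂ φ (f 0) P.divX ∈ q 0 := by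
            have hrw : Polynomial.eval₂ φ (f 0) P
                = f 0 * Polynomial.eval₂ φ (f 0) P.divX := by
              conv_lhs => rw [← hfac]
              rw [Polynomial.eval₂_mul, Polynomial.eval₂_X]
            rwa [hrw] at hev
          have := ((hprime 0).mem_or_mem hev').resolve_left h00
          refine ihm P.divX.natDegree ?_ P.divX rfl hdvx this
          rw [Polynomial.natDegree_divX_eq_natDegree_tsub_one]
          omega
        · have hee : Polynomial.eval₂ φ (f 0) P
              = f 0 * Polynomial.eval₂ φ (f 0) P.divX + φ (P.coeff 0) := by
            conv_lhs => rw [← Polynomial.X_mul_divX_add P]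
            rw [Polynomial.eval₂_add, Polynomial.eval₂_mul, Polynomial.eval₂_X,
              Polynomial.eval₂_C]
          have hev1 : φ (P.coeff 0) ∈ q 1 := by
            have h2 : Polynomial.eval₂ φ (f 0) P ∈ q 1 := h01 hev
            rw [hee] at h2
            have h3 : f 0 * Polynomial.eval₂ φ (f 0) P.divX ∈ q 1 :=
              Ideal.mul_mem_right _ _ h0mem
            simpa using Ideal.sub_mem _ h2 h3
          obtain ⟨b, hb, hbmem⟩ := ih (fun j => q j.succ) (fun j => hprime _)
            (fun j => by show q j.castSucc.succ ≤ q j.succ.succ; rw [Fin.succ_castSucc]; exact hchain j.succ)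
            (fun j => f j.succ) (fun j => hmem j.succ)
            (fun j => by show f j.succ ∉ q j.castSucc.succ; rw [Fin.succ_castSucc]; exact hnmem j.succ)
            (P.coeff 0) h0 (by simpa [hφ, Fin.succ_zero_eq_one] using hev1)
          refine ⟨b, hb, ?_⟩
          rwa [Fin.succ_last] at hbmem
    exact inner (finSuccEquiv B n Q).natDegree _ rfl hPne (hkey ▸ heval)

lemma mySumInr {k : Type*} [CommSemiring k] (σ₁ σ₂ : Type*) (b : MvPolynomial σ₂ k) :
    sumAlgEquiv k σ₁ σ₂ (rename Sum.inr b) = C b := by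
  have h := MvPolynomial.sumAlgEquiv_comp_rename_inr (R := k) (S₁ := σ₁) (S₂ := σ₂)
  have h2 := DFunLike.congr_fun h b
  simpa [algebraMap_eq] using h2


/-- Given generators `p 1, …, p s` of a proper ideal `I` of `k[z_1,…,z_N]` and a subset
`T ⊆ [N]`, let `I_T` be the ideal of `k[Z_T]` generated by those generators that only involve
variables in `T`.  If `height I_T > |T \ Ω|` for some `T`, then the elimination ideal
`I ∩ k[Z_Ω]` is nonzero. -/
theorem elimination_ne_zero_of_height {k : Type*} [Field k] {N s : ℕ}
    (p : Fin s → MvPolynomial (Fin N) k)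
    (hproper : Ideal.span (Set.range p) ≠ ⊤)
    (Ω T : Finset (Fin N))
    (h : (((T \ Ω).card : ℕ∞)) <
      idealHeight (Ideal.span {q : MvPolynomial {i : Fin N // i ∈ T} k |
        MvPolynomial.rename (Subtype.val) q ∈ Set.range p})) :
    ∃ f ∈ Ideal.span (Set.range p),
      f ≠ 0 ∧ f ∈ MvPolynomial.supported k (↑Ω : Set (Fin N)) := by
  classical
  by_contra hcon
  push_neg at hcon
  refine absurd h (not_lt.mpr ?_)
  set c := (T \ Ω).card with hc
  set σT := {i : Fin N // i ∈ T} with hσT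
  set R₀ := MvPolynomial σT k with hR₀
  set IT : Ideal R₀ := Ideal.span {q : MvPolynomial σT k |
      MvPolynomial.rename (Subtype.val) q ∈ Set.range p} with hIT
  -- the multiplicative set of nonzero polynomials supported on Ω-variables
  let Sc : Submonoid R₀ :=
  { carrier := {r : R₀ | r ≠ 0 ∧ r ∈ supported k {i : σT | (i : Fin N) ∈ Ω}}
    mul_mem' := fun ha hb => ⟨mul_ne_zero ha.1 hb.1, mul_mem ha.2 hb.2⟩
    one_mem' := ⟨one_ne_zero, one_mem _⟩ }
  have hdisj : Disjoint (IT : Set R₀) (Sc : Set R₀) := by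
    rw [Set.disjoint_left]
    rintro q hq ⟨hqne, hqsupp⟩
    have h1 : rename (Subtype.val : σT → Fin N) q ∈ Ideal.span (Set.range p) := by
      have hmap : Ideal.map (rename (Subtype.val : σT → Fin N) : R₀ →ₐ[k] MvPolynomial (Fin N) k)
          IT ≤ Ideal.span (Set.range p) := by
        rw [hIT, Ideal.map_span, Ideal.span_le]
        rintro x ⟨y, hy, rfl⟩
        exact Ideal.subset_span hy
      exact hmap (Ideal.mem_map_of_mem _ hq)
    have h2 : rename (Subtype.val : σT → Fin N) q ≠ 0 := by
      intro h0
      exact hqne (rename_injective _ Subtype.val_injective (by simpa using h0))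
    have h3 : rename (Subtype.val : σT → Fin N) q ∈ supported k (↑Ω : Set (Fin N)) := by
      rw [mem_supported] at hqsupp ⊢
      intro i hi
      obtain ⟨j, hj, rfl⟩ := Finset.mem_image.mp (vars_rename _ q (by exact_mod_cast hi))
      exact Finset.mem_coe.mpr (hqsupp hj)
    exact hcon _ h1 h2 h3
  obtain ⟨P, hPprime, hIP, hPdisj⟩ := IT.exists_le_prime_disjoint Sc hdisj
  have hht : Order.height (⟨P, hPprime⟩ : PrimeSpectrum R₀) ≤ (c : ℕ∞) := by
    apply Order.height_le
    intro χ hlast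
    by_contra hlen
    push_neg at hlen
    have hlc : c < χ.length := by exact_mod_cast hlen
    have hle : c + 2 ≤ χ.length + 1 := by omega
    -- transport to the model ring
    let σ₁ := {i : Fin N // i ∈ T \ Ω}
    let σ₂ := {i : Fin N // i ∈ T ∩ Ω}
    let eσ : σT ≃ (σ₁ ⊕ σ₂) :=
    { toFun := fun i => if hi : (i : Fin N) ∈ Ω then Sum.inr ⟨i, Finset.mem_inter.mpr ⟨i.2, hi⟩⟩
        else Sum.inl ⟨i, Finset.mem_sdiff.mpr ⟨i.2, hi⟩⟩
      invFun := Sum.elim (fun j => ⟨j.1, (Finset.mem_sdiff.mp j.2).1⟩)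
        (fun j => ⟨j.1, (Finset.mem_inter.mp j.2).1⟩)
      left_inv := fun i => by by_cases hi : (i : Fin N) ∈ Ω <;> simp [hi]
      right_inv := fun j => by
        rcases j with j | j
        · have := (Finset.mem_sdiff.mp j.2).2
          simp [this]
        · have := (Finset.mem_inter.mp j.2).2
          simp [this] }
    let B := MvPolynomial σ₂ k
    let e : R₀ ≃ₐ[k] MvPolynomial σ₁ B := (renameEquiv k eσ).trans (sumAlgEquiv k σ₁ σ₂)
    let Q2 : Fin (c + 2) → Ideal (MvPolynomial σ₁ B) :=
      fun j => Ideal.comap (e.symm : MvPolynomial σ₁ B ≃ₐ[k] R₀) (χ (Fin.castLE hle j)).asIdeal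
    have hQ2mem : ∀ (j : Fin (c + 2)) (x : MvPolynomial σ₁ B),
        x ∈ Q2 j ↔ e.symm x ∈ (χ (Fin.castLE hle j)).asIdeal := fun j x => Iff.rfl
    have hQ2prime : ∀ j, (Q2 j).IsPrime := by
      intro j
      have := (χ (Fin.castLE hle j)).isPrime
      exact Ideal.IsPrime.comap _
    have hQ2lt : ∀ j : Fin (c + 1), Q2 j.castSucc < Q2 j.succ := by
      intro j
      have hχ : χ (Fin.castLE hle j.castSucc) < χ (Fin.castLE hle j.succ) := by
        apply χ.strictMono
        simp [Fin.lt_def]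
      have hid : (χ (Fin.castLE hle j.castSucc)).asIdeal < (χ (Fin.castLE hle j.succ)).asIdeal :=
        (PrimeSpectrum.asIdeal_lt_asIdeal _ _).mpr hχ
      refine lt_of_le_of_ne (Ideal.comap_mono hid.le) ?_
      obtain ⟨x, hxJ, hxI⟩ := SetLike.exists_of_lt hid
      intro heq
      have hmem : e x ∈ Q2 j.succ := by
        rw [hQ2mem]
        simpa using hxJ
      rw [← heq, hQ2mem] at hmem
      simp only [AlgEquiv.symm_apply_apply] at hmem
      exact hxI hmem
    choose F hFmem hFnmem using fun j : Fin (c + 1) => SetLike.exists_of_lt (hQ2lt j)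
    have hcard : Fintype.card σ₁ ≤ c := by
      rw [hc]
      exact (Fintype.card_coe (T \ Ω)).le
    obtain ⟨Q, hQne, hQeval⟩ := myDep c hcard F
    obtain ⟨b, hbne, hbmem⟩ := myChain (c + 1) Q2 hQ2prime
      (fun j => (hQ2lt j).le) F hFmem hFnmem Q hQne (by rw [hQeval]; exact Ideal.zero_mem _)
    -- compute `e.symm (C b)`
    let ι₂ : σ₂ → σT := fun j => ⟨j.1, (Finset.mem_inter.mp j.2).1⟩
    have hι₂inj : Function.Injective ι₂ := by
      intro a b hab
      exact Subtype.ext (congrArg (Subtype.val : σT → Fin N) hab)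
    have hCb : e (rename ι₂ b) = C b := by
      show (sumAlgEquiv k σ₁ σ₂) ((renameEquiv k eσ) (rename ι₂ b)) = C b
      have : (renameEquiv k eσ) (rename ι₂ b) = rename Sum.inr b := by
        show rename eσ (rename ι₂ b) = rename Sum.inr b
        have hcomp : (⇑eσ ∘ ι₂ : σ₂ → σ₁ ⊕ σ₂) = Sum.inr := by
          funext j
          show eσ (ι₂ j) = Sum.inr j
          have hj : ((ι₂ j : σT) : Fin N) ∈ Ω := (Finset.mem_inter.mp j.2).2
          simp only [eσ, Equiv.coe_fn_mk, dif_pos hj]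
          rfl
        rw [rename_rename, hcomp]
      rw [this]
      exact mySumInr σ₁ σ₂ b
    have hsymmCb : e.symm (C b) = rename ι₂ b := by
      rw [← hCb, AlgEquiv.symm_apply_apply]
    -- the element lies in P
    have hinP : rename ι₂ b ∈ P := by
      have h5 : algebraMap B (MvPolynomial σ₁ B) b ∈ Q2 (Fin.last (c + 1)) := hbmem
      rw [hQ2mem] at h5
      rw [algebraMap_eq, hsymmCb] at h5
      have h6 : χ (Fin.castLE hle (Fin.last (c + 1))) ≤ χ.last := χ.monotone (Fin.le_last _)
      rw [hlast] at h6
      exact (PrimeSpectrum.asIdeal_le_asIdeal _ _).mpr h6 h5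
    -- but it also lies in Sc
    have hinS : rename ι₂ b ∈ Sc := by
      constructor
      · intro h0
        exact hbne (rename_injective _ hι₂inj (by simpa using h0))
      · rw [mem_supported]
        intro i hi
        obtain ⟨j, hj, rfl⟩ := Finset.mem_image.mp (vars_rename _ b (by exact_mod_cast hi))
        exact (Finset.mem_inter.mp j.2).2
    exact Set.disjoint_left.mp hPdisj hinP hinS
  calc idealHeight IT ≤ Order.height (⟨P, hPprime⟩ : PrimeSpectrum R₀) := by
        rw [idealHeight]
        exact iInf₂_le (⟨P, hPprime⟩ : PrimeSpectrum R₀) hIP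
    _ ≤ (c : ℕ∞) := hht
end

section
/- Let A_1,…,A_s be dependent sets of a matroid M on ground set X such that for each i = 2,…,s the set A_i ∩ (A_1 ∪ … ∪ A_{i−1}) is independent. Then for any subset B ⊆ X with |B| < s, the set (A_1 ∪ … ∪ A_s) \ B is dependent in M. -/
open Set Matroid

private lemma nullity_well_defined {α : Type*} {M : Matroid α} {I J X : Set α}
    (hI : M.IsBasis I X) (hJ : M.IsBasis J X) : (X \ I).encard = (X \ J).encard := by
  have h1 : (M ↾ X)✶.IsBase ((M ↾ X).E \ I) := hI.isBase_restrict.compl_isBase_dual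
  have h2 : (M ↾ X)✶.IsBase ((M ↾ X).E \ J) := hJ.isBase_restrict.compl_isBase_dual
  simpa using h1.encard_eq_encard_of_isBase h2

private lemma aux_claim {α : Type*} (M : Matroid α) {s : ℕ} (A : Fin s → Set α)
    (hdep : ∀ i, M.Dep (A i))
    (hind : ∀ i : Fin s, 0 < i.val → M.Indep (A i ∩ ⋃ j : Fin s, ⋃ (_ : j < i), A j)) :
    ∀ t, t ≤ s → ∀ I, M.IsBasis I (⋃ i : Fin s, ⋃ (_ : i.val < t), A i) →
      (t : ℕ∞) ≤ ((⋃ i : Fin s, ⋃ (_ : i.val < t), A i) \ I).encard := by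
  intro t
  induction t with
  | zero => intro _ I _; simp
  | succ t ih =>
    intro hts I' hI'
    have hts' : t < s := hts
    set i0 : Fin s := ⟨t, hts'⟩ with hi0
    set U : Set α := ⋃ i : Fin s, ⋃ (_ : i.val < t), A i with hU
    set U' : Set α := ⋃ i : Fin s, ⋃ (_ : i.val < t + 1), A i with hU'
    have hUE : U ⊆ M.E := by
      refine iUnion_subset fun i => iUnion_subset fun _ => (hdep i).subset_ground
    have hU'E : U' ⊆ M.E := by
      refine iUnion_subset fun i => iUnion_subset fun _ => (hdep i).subset_ground
    have hU'eq : U' = U ∪ A i0 := by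
      ext x
      simp only [hU', hU, mem_iUnion, mem_union]
      constructor
      · rintro ⟨i, hi, hx⟩
        rcases lt_or_eq_of_le (Nat.lt_succ_iff.mp hi) with h | h
        · exact Or.inl ⟨i, h, hx⟩
        · refine Or.inr ?_
          have : i = i0 := Fin.ext h
          exact this ▸ hx
      · rintro (⟨i, hi, hx⟩ | hx)
        · exact ⟨i, Nat.lt_succ_of_lt hi, hx⟩
        · exact ⟨i0, Nat.lt_succ_self t, hx⟩
    -- P := A i0 ∩ U is independent
    have hP : M.Indep (A i0 ∩ U) := by
      rcases Nat.eq_zero_or_pos t with ht0 | ht0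
      · have : U = ∅ := by
          simp only [hU, ht0]
          exact iUnion_eq_empty.mpr fun i => by simp
        rw [this, inter_empty]; exact M.empty_indep
      · have := hind i0 ht0
        have hUeq : (⋃ j : Fin s, ⋃ (_ : j < i0), A j) = U := by
          ext x
          simp [hU, hi0, Fin.lt_def]
        rwa [hUeq] at this
    -- extend P to a basis K of U
    obtain ⟨K, hK, hPK⟩ := hP.subset_isBasis_of_subset inter_subset_right hUE
    -- extend K to a basis I of U'
    obtain ⟨I, hI, hKI⟩ := hK.indep.subset_isBasis_of_subset
      (hK.subset.trans (hU'eq ▸ subset_union_left)) hU'E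
    -- I ∩ U = K
    have hIU : I ∩ U = K := by
      refine (hK.eq_of_subset_indep (hI.indep.inter_right U)
        (subset_inter hKI hK.subset) inter_subset_right).symm
    -- exists x ∈ A i0 \ (U ∪ I)
    have hx : ∃ x, x ∈ A i0 ∧ x ∉ U ∧ x ∉ I := by
      by_contra h
      push_neg at h
      have hAsub : A i0 ⊆ I := by
        intro x hxA
        by_cases hxU : x ∈ U
        · exact hKI (hPK ⟨hxA, hxU⟩)
        · exact h x hxA hxU
      exact (hdep i0).not_indep (hI.indep.subset hAsub)
    obtain ⟨x, hxA, hxU, hxI⟩ := hx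
    have hsub : insert x (U \ K) ⊆ U' \ I := by
      rintro y (rfl | ⟨hyU, hyK⟩)
      · exact ⟨hU'eq ▸ Or.inr hxA, hxI⟩
      · refine ⟨hU'eq ▸ Or.inl hyU, fun hyI => hyK (hIU ▸ ⟨hyI, hyU⟩)⟩
    have hxnot : x ∉ U \ K := fun h => hxU h.1
    have hcard : (t : ℕ∞) + 1 ≤ (U' \ I).encard := by
      calc (t : ℕ∞) + 1 ≤ (U \ K).encard + 1 :=
            add_le_add_left (ih hts'.le K hK) 1
        _ = (insert x (U \ K)).encard := (encard_insert_of_notMem hxnot).symm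
        _ ≤ (U' \ I).encard := encard_mono hsub
    have := nullity_well_defined hI' hI
    rw [this]
    push_cast
    exact hcard

/-- (Rado/Asche) If `A 1, …, A s` are dependent sets of a matroid `M` such that each
`A i ∩ (A 1 ∪ … ∪ A (i-1))` is independent, then for any `B` with `|B| < s` the set
`(A 1 ∪ … ∪ A s) \ B` is dependent. -/
theorem dep_union_diff_of_dep_family {α : Type*} (M : Matroid α) {s : ℕ}
    (A : Fin s → Set α)
    (hdep : ∀ i, M.Dep (A i))
    (hind : ∀ i : Fin s, 0 < i.val → M.Indep (A i ∩ ⋃ j : Fin s, ⋃ (_ : j < i), A j))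
    (B : Set α) (hB : B.Finite) (hcard : B.ncard < s) :
    M.Dep ((⋃ i, A i) \ B) := by
  set U : Set α := ⋃ i, A i with hU
  have hUE : U ⊆ M.E := iUnion_subset fun i => (hdep i).subset_ground
  rw [Matroid.dep_iff]
  refine ⟨fun hindep => ?_, diff_subset.trans hUE⟩
  obtain ⟨I, hI, hDI⟩ := hindep.subset_isBasis_of_subset diff_subset hUE
  have hUfull : (⋃ i : Fin s, ⋃ (_ : i.val < s), A i) = U := by
    apply iUnion_congr fun i => ?_
    simp [i.isLt]
  have hclaim := aux_claim M A hdep hind s le_rfl I (hUfull ▸ hI)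
  rw [hUfull] at hclaim
  have hsubB : U \ I ⊆ B := by
    intro y ⟨hyU, hyI⟩
    by_contra hyB
    exact hyI (hDI ⟨hyU, hyB⟩)
  have hle : (U \ I).encard ≤ B.encard := encard_mono hsubB
  have hBe : B.encard < (s : ℕ∞) := by
    rw [← hB.cast_ncard_eq]
    exact_mod_cast hcard
  exact ((hclaim.trans hle).trans_lt hBe).false
end

section
/- Let Z be an m × n matrix of variables over an infinite field k, let r < min(m,n), and let I_{r+1}(Z) be the ideal of (r+1)-minors. If I ⊆ [m] and J ⊆ [n] satisfy |I| ≤ r or |J| ≤ r, then for any Ω ⊆ I × J, the elimination ideal I_{r+1}(Z) ∩ k[Z_Ω] is zero; that is, the residues of the variables z_{ij} for (i,j) ∈ Ω are algebraically independent over k in k[Z]/I_{r+1}(Z). -/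
open MvPolynomial

/-- The ideal of `(r+1)`-minors of the generic `m × n` matrix of variables. -/
noncomputable def detIdeal (k : Type*) [CommRing k] (m n r : ℕ) :
    Ideal (MvPolynomial (Fin m × Fin n) k) :=
  Ideal.span { p | ∃ f : Fin (r + 1) → Fin m, ∃ g : Fin (r + 1) → Fin n,
    Function.Injective f ∧ Function.Injective g ∧
    p = (Matrix.of fun i j => (X (f i, g j) : MvPolynomial (Fin m × Fin n) k)).det }

/-- If `Ω ⊆ I × J` with `|I| ≤ r` or `|J| ≤ r`, then the residues of the variables `z_{ij}`,
`(i,j) ∈ Ω`, modulo the ideal of `(r+1)`-minors are algebraically independent over `k`. -/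
theorem algIndep_of_small_block {k : Type*} [Field k] [Infinite k] {m n r : ℕ}
    (hrm : r < m) (hrn : r < n)
    (I : Finset (Fin m)) (J : Finset (Fin n)) (Ω : Finset (Fin m × Fin n))
    (hΩ : Ω ⊆ I ×ˢ J) (h : I.card ≤ r ∨ J.card ≤ r) :
    AlgebraicIndependent k
      (fun p : Ω => Ideal.Quotient.mk (detIdeal k m n r) (X p.val)) := by
  classical
  set φ : MvPolynomial (Fin m × Fin n) k →ₐ[k] MvPolynomial Ω k :=
    aeval (fun p => if h : p ∈ Ω then X (⟨p, h⟩ : Ω) else 0) with hφ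
  have hker : detIdeal k m n r ≤ RingHom.ker (φ : MvPolynomial (Fin m × Fin n) k →+* MvPolynomial Ω k) := by
    rw [detIdeal, Ideal.span_le]
    rintro p ⟨f, g, hf, hg, rfl⟩
    simp only [SetLike.mem_coe, RingHom.mem_ker]
    rw [show (φ : MvPolynomial (Fin m × Fin n) k →+* MvPolynomial Ω k)
        ((Matrix.of fun i j => (X (f i, g j) : MvPolynomial (Fin m × Fin n) k)).det)
      = ((Matrix.of fun i j => (X (f i, g j) : MvPolynomial (Fin m × Fin n) k)).map φ).det
      from (RingHom.map_det _ _)]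
    rcases h with hI | hJ
    · -- some row of the submatrix lies outside I, hence maps to zero
      have : ∃ i : Fin (r + 1), f i ∉ I := by
        by_contra hc
        push_neg at hc
        have := Finset.card_le_card_of_injOn (s := Finset.univ) f (fun i _ => hc i)
          (fun a _ b _ hab => hf hab)
        simp at this
        omega
      obtain ⟨i, hi⟩ := this
      apply Matrix.det_eq_zero_of_row_eq_zero i
      intro j
      have hnot : (f i, g j) ∉ Ω := fun hmem => hi (Finset.mem_product.mp (hΩ hmem)).1
      simp [hφ, Matrix.map_apply, hnot]
    · have : ∃ j : Fin (r + 1), g j ∉ J := by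
        by_contra hc
        push_neg at hc
        have := Finset.card_le_card_of_injOn (s := Finset.univ) g (fun i _ => hc i)
          (fun a _ b _ hab => hg hab)
        simp at this
        omega
      obtain ⟨j, hj⟩ := this
      apply Matrix.det_eq_zero_of_column_eq_zero j
      intro i
      have hnot : (f i, g j) ∉ Ω := fun hmem => hj (Finset.mem_product.mp (hΩ hmem)).2
      simp [hφ, Matrix.map_apply, hnot]
  set ψ : MvPolynomial (Fin m × Fin n) k ⧸ detIdeal k m n r →ₐ[k] MvPolynomial Ω k :=
    Ideal.Quotient.liftₐ (detIdeal k m n r) φ (fun a ha => hker ha) with hψ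
  have hcomp : (ψ ∘ fun p : Ω => Ideal.Quotient.mk (detIdeal k m n r) (X p.val))
      = (X : Ω → MvPolynomial Ω k) := by
    funext p
    show φ (X p.val) = X p
    simp [hφ, p.2]
  exact AlgebraicIndependent.of_comp ψ (hcomp ▸ MvPolynomial.algebraicIndependent_X Ω k)
end

section
/- Let Z be an m × n matrix of variables over an infinite field k and r < min(m,n). Suppose Ω ⊆ I × J where I ⊆ [m], J ⊆ [n] with |I| = |J| = r+1. Then the residues of the variables Z_Ω in k[Z]/I_{r+1}(Z) are algebraically dependent over k if and only if Ω = I × J. -/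
open MvPolynomial

namespace DepAux

variable {k : Type*} [Field k] {m n r : ℕ}

lemma aeval_mk_X (Ω : Finset (Fin m × Fin n)) (P : MvPolynomial Ω k) :
    aeval (fun p : Ω => Ideal.Quotient.mk (detIdeal k m n r) (X p.val)) P
      = Ideal.Quotient.mk (detIdeal k m n r) (rename Subtype.val P) := by
  have h : ∀ q : MvPolynomial (Fin m × Fin n) k,
      aeval (fun t : Fin m × Fin n => Ideal.Quotient.mk (detIdeal k m n r) (X t)) q
        = Ideal.Quotient.mk (detIdeal k m n r) q := by
    intro q
    conv_rhs => rw [← Ideal.Quotient.mkₐ_eq_mk k,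
      MvPolynomial.aeval_unique (Ideal.Quotient.mkₐ k (detIdeal k m n r))]
    rfl
  rw [← h, aeval_rename]
  rfl

lemma det_X_ne_zero {s : ℕ} {f : Fin s → Fin m} {g : Fin s → Fin n}
    (hf : Function.Injective f) (hg : Function.Injective g) :
    (Matrix.of fun i j => (X (f i, g j) : MvPolynomial (Fin m × Fin n) k)).det ≠ 0 := by
  intro h
  have h2 := congrArg (eval (fun p : Fin m × Fin n =>
      if ∃ i, f i = p.1 ∧ g i = p.2 then (1 : k) else 0)) h
  rw [map_zero, RingHom.map_det, RingHom.mapMatrix_apply] at h2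
  have h3 : ((Matrix.of fun i j => (X (f i, g j) : MvPolynomial (Fin m × Fin n) k)).map
      (eval (fun p : Fin m × Fin n => if ∃ i, f i = p.1 ∧ g i = p.2 then (1 : k) else 0))) = 1 := by
    ext i j
    have hcond : (∃ i', f i' = f i ∧ g i' = g j) ↔ i = j := by
      constructor
      · rintro ⟨i', h1, h2⟩
        exact (hf h1) ▸ (hg h2)
      · rintro rfl; exact ⟨i, rfl, rfl⟩
    simp only [Matrix.map_apply, Matrix.of_apply, eval_X, Matrix.one_apply]
    rw [if_congr hcond rfl rfl]
  rw [h3, Matrix.det_one] at h2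
  exact one_ne_zero h2

lemma eval_zero_of_mem_detIdeal {M : Fin m × Fin n → k}
    (hM : ∀ (f : Fin (r + 1) → Fin m) (g : Fin (r + 1) → Fin n), Function.Injective f →
      Function.Injective g → (Matrix.of fun i j => M (f i, g j)).det = 0)
    {p : MvPolynomial (Fin m × Fin n) k} (hp : p ∈ detIdeal k m n r) :
    eval M p = 0 := by
  have hle : detIdeal k m n r ≤ RingHom.ker (eval M) := by
    rw [detIdeal, Ideal.span_le]
    rintro q ⟨f, g, hf, hg, rfl⟩
    simp only [SetLike.mem_coe, RingHom.mem_ker]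
    rw [RingHom.map_det, RingHom.mapMatrix_apply]
    rw [show ((Matrix.of fun i j => (X (f i, g j) : MvPolynomial (Fin m × Fin n) k)).map (eval M))
        = Matrix.of fun i j => M (f i, g j) by ext i j; simp]
    exact hM f g hf hg
  exact hle hp

lemma det_update_entry {s : ℕ} (W : Matrix (Fin s) (Fin s) k) (a0 b0 : Fin s) (t : k) :
    (W.updateRow a0 (Function.update (W a0) b0 t)).det
      = (W.updateRow a0 (Function.update (W a0) b0 0)).det
        + t * (W.updateRow a0 (Pi.single b0 1)).det := by
  have h : Function.update (W a0) b0 t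
      = Function.update (W a0) b0 0 + t • (Pi.single b0 1 : Fin s → k) := by
    funext b
    by_cases hb : b = b0 <;>
      simp [Function.update_apply, Pi.single_apply, hb]
  rw [h, Matrix.det_updateRow_add, Matrix.det_updateRow_smul]

lemma indep_of_ne [Infinite k]
    (I : Finset (Fin m)) (J : Finset (Fin n)) (Ω : Finset (Fin m × Fin n))
    (hI : I.card = r + 1) (hJ : J.card = r + 1) (hΩ : Ω ⊆ I ×ˢ J) (hne : Ω ≠ I ×ˢ J) :
    AlgebraicIndependent k
      (fun p : Ω => Ideal.Quotient.mk (detIdeal k m n r) (X p.val)) := by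
  rw [algebraicIndependent_iff]
  intro P hP
  -- enumerate I and J
  let eI : {x // x ∈ I} ≃ Fin (r + 1) := I.equivFin.trans (finCongr hI)
  let eJ : {x // x ∈ J} ≃ Fin (r + 1) := J.equivFin.trans (finCongr hJ)
  set f : Fin (r + 1) → Fin m := fun a => (eI.symm a).val with hf_def
  set g : Fin (r + 1) → Fin n := fun b => (eJ.symm b).val with hg_def
  have hf_inj : Function.Injective f := fun a b h => eI.symm.injective (Subtype.ext h)
  have hg_inj : Function.Injective g := fun a b h => eJ.symm.injective (Subtype.ext h)
  have hf_mem : ∀ a, f a ∈ I := fun a => (eI.symm a).2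
  have hg_mem : ∀ b, g b ∈ J := fun b => (eJ.symm b).2
  have hf_surj : ∀ x ∈ I, ∃ a, f a = x := fun x hx => ⟨eI ⟨x, hx⟩, by simp [hf_def]⟩
  have hg_surj : ∀ x ∈ J, ∃ b, g b = x := fun x hx => ⟨eJ ⟨x, hx⟩, by simp [hg_def]⟩
  -- a missing entry
  have hss : Ω ⊂ I ×ˢ J := Finset.ssubset_iff_subset_ne.mpr ⟨hΩ, hne⟩
  obtain ⟨q, hqIJ, hqΩ⟩ := Finset.exists_of_ssubset hss
  obtain ⟨hq1, hq2⟩ := Finset.mem_product.mp hqIJ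
  obtain ⟨a0, ha0⟩ := hf_surj q.1 hq1
  obtain ⟨b0, hb0⟩ := hg_surj q.2 hq2
  have hq : (f a0, g b0) = q := by rw [ha0, hb0]
  -- the cofactor polynomial
  set C0 : MvPolynomial (Fin m × Fin n) k :=
    ((Matrix.of fun i j => (X (f i, g j) : MvPolynomial (Fin m × Fin n) k)).updateRow a0
      (Pi.single b0 1)).det with hC0_def
  -- C0 is a nonzero polynomial
  have hC0 : C0 ≠ 0 := by
    intro h0
    set τ : Equiv.Perm (Fin (r + 1)) := Equiv.swap a0 b0 with hτ_def
    set w0 : Fin m × Fin n → k :=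
      fun p => if ∃ i, f i = p.1 ∧ g (τ i) = p.2 then (1 : k) else 0 with hw0_def
    have h2 := congrArg (eval w0) h0
    rw [map_zero, hC0_def, RingHom.map_det, RingHom.mapMatrix_apply] at h2
    have h3 : (((Matrix.of fun i j => (X (f i, g j) : MvPolynomial (Fin m × Fin n) k)).updateRow a0
        (Pi.single b0 1)).map (eval w0)) = (1 : Matrix (Fin (r+1)) (Fin (r+1)) k).submatrix τ id := by
      ext i j
      by_cases hi : i = a0
      · subst hi
        simp only [Matrix.map_apply, Matrix.updateRow_self, Matrix.submatrix_apply, id_eq,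
          Matrix.one_apply]
        rw [Pi.single_apply, apply_ite (eval w0), map_one, map_zero,
          show τ i = b0 from Equiv.swap_apply_left i b0]
        by_cases hj : j = b0
        · simp [hj]
        · rw [if_neg hj, if_neg fun h => hj h.symm]
      · simp only [Matrix.map_apply, Matrix.updateRow_ne hi, Matrix.of_apply, eval_X,
          Matrix.submatrix_apply, id_eq, Matrix.one_apply, hw0_def]
        have hcond : (∃ i', f i' = f i ∧ g (τ i') = g j) ↔ τ i = j := by
          constructor
          · rintro ⟨i', h1, h2⟩
            obtain rfl := hf_inj h1
            exact hg_inj h2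
          · rintro rfl; exact ⟨i, rfl, rfl⟩
        rw [if_congr hcond rfl rfl]
    rw [h3, Matrix.det_permute, Matrix.det_one, mul_one] at h2
    rcases Int.units_eq_one_or (Equiv.Perm.sign τ) with hs | hs <;> rw [hs] at h2 <;>
      simp at h2
  -- the key vanishing statement
  have key : ∀ w : Fin m × Fin n → k, eval w (rename Subtype.val P * C0) = 0 := by
    intro w
    rw [map_mul]
    by_cases hc : eval w C0 = 0
    · rw [hc, mul_zero]
    · suffices hsuf : eval w (rename Subtype.val P) = 0 by rw [hsuf, zero_mul]
      set W : Matrix (Fin (r + 1)) (Fin (r + 1)) k := Matrix.of fun a b => w (f a, g b)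
        with hW_def
      have hcW : eval w C0 = (W.updateRow a0 (Pi.single b0 1)).det := by
        rw [hC0_def, RingHom.map_det, RingHom.mapMatrix_apply]
        congr 1
        ext i j
        by_cases hi : i = a0
        · subst hi
          simp only [Matrix.map_apply, Matrix.updateRow_self]
          rw [Pi.single_apply, Pi.single_apply, apply_ite (eval w), map_one, map_zero]
        · simp [Matrix.map_apply, Matrix.updateRow_ne hi, hW_def]
      set c : k := (W.updateRow a0 (Pi.single b0 1)).det with hc_def
      set d : k := (W.updateRow a0 (Function.update (W a0) b0 0)).det with hd_def
      have hc0 : c ≠ 0 := fun h => hc (by rw [hcW, h])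
      set t : k := -(d / c) with ht_def
      set M : Fin m × Fin n → k := fun p =>
        if p.1 ∈ I ∧ p.2 ∈ J then (if p = (f a0, g b0) then t else w p) else 0 with hM_def
      have hblock : ∀ a b, M (f a, g b) = if a = a0 ∧ b = b0 then t else w (f a, g b) := by
        intro a b
        rw [hM_def]
        simp only [if_pos (⟨hf_mem a, hg_mem b⟩ : f a ∈ I ∧ g b ∈ J)]
        congr 1
        simp [Prod.ext_iff, hf_inj.eq_iff, hg_inj.eq_iff]
      have hdetB : (Matrix.of fun a b => M (f a, g b)).det = 0 := by
        have hB : (Matrix.of fun a b => M (f a, g b))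
            = W.updateRow a0 (Function.update (W a0) b0 t) := by
          ext a b
          rw [Matrix.of_apply, hblock]
          by_cases ha : a = a0
          · subst ha
            by_cases hb : b = b0 <;>
              simp [Matrix.updateRow_self, Function.update_apply, hb, hW_def]
          · simp [Matrix.updateRow_ne ha, ha, hW_def]
        rw [hB, det_update_entry, ← hd_def, ← hc_def, ht_def, neg_mul,
          div_mul_cancel₀ _ hc0, add_neg_cancel]
      have hM : ∀ (f' : Fin (r + 1) → Fin m) (g' : Fin (r + 1) → Fin n),
          Function.Injective f' → Function.Injective g' →
          (Matrix.of fun i j => M (f' i, g' j)).det = 0 := by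
        intro f' g' hf' hg'
        by_cases hA : ∀ i, f' i ∈ I
        · by_cases hB2 : ∀ j, g' j ∈ J
          · choose σ hσ using fun i => hf_surj (f' i) (hA i)
            choose τ hτ using fun j => hg_surj (g' j) (hB2 j)
            have hσinj : Function.Injective σ := fun i j h =>
              hf' (by rw [← hσ, ← hσ, h])
            have hτinj : Function.Injective τ := fun i j h =>
              hg' (by rw [← hτ, ← hτ, h])
            let σe : Equiv.Perm (Fin (r + 1)) :=
              Equiv.ofBijective σ (Finite.injective_iff_bijective.mp hσinj)
            let τe : Equiv.Perm (Fin (r + 1)) :=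
              Equiv.ofBijective τ (Finite.injective_iff_bijective.mp hτinj)
            have hsub : (Matrix.of fun i j => M (f' i, g' j))
                = ((Matrix.of fun a b => M (f a, g b)).submatrix σe id).submatrix id τe := by
              ext i j
              simp only [Matrix.submatrix_apply, Matrix.of_apply, id_eq]
              rw [show σe i = σ i from rfl, show τe j = τ j from rfl, hσ, hτ]
            rw [hsub, Matrix.det_permute', Matrix.det_permute, hdetB, mul_zero, mul_zero]
          · push_neg at hB2
            obtain ⟨j, hj⟩ := hB2
            refine Matrix.det_eq_zero_of_column_eq_zero j fun i => ?_
            rw [Matrix.of_apply, hM_def]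
            exact if_neg fun h => hj h.2
        · push_neg at hA
          obtain ⟨i, hi⟩ := hA
          refine Matrix.det_eq_zero_of_row_eq_zero i fun j => ?_
          rw [Matrix.of_apply, hM_def]
          exact if_neg fun h => hi h.1
      -- rename P lies in the ideal, hence vanishes at M
      have hmem : rename Subtype.val P ∈ detIdeal k m n r := by
        rw [← Ideal.Quotient.eq_zero_iff_mem, ← aeval_mk_X]
        exact hP
      have hevalM : eval M (rename Subtype.val P) = 0 :=
        eval_zero_of_mem_detIdeal hM hmem
      rw [eval_rename] at hevalM ⊢
      rw [show (w ∘ Subtype.val : Ω → k) = (M ∘ Subtype.val : Ω → k) from ?_]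
      · exact hevalM
      · funext p
        have hpIJ : p.val ∈ I ×ˢ J := hΩ p.2
        obtain ⟨h1, h2⟩ := Finset.mem_product.mp hpIJ
        have hpne : p.val ≠ (f a0, g b0) := fun h => hqΩ (by rw [← hq, ← h]; exact p.2)
        simp only [Function.comp_apply, hM_def]
        rw [if_pos ⟨h1, h2⟩, if_neg hpne]
  -- conclude P = 0
  have hPC : rename Subtype.val P * C0 = 0 :=
    MvPolynomial.funext fun x => by rw [key x, map_zero]
  rcases mul_eq_zero.mp hPC with h | h
  · exact rename_injective Subtype.val Subtype.val_injective (by rw [h, map_zero])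
  · exact absurd h hC0

end DepAux

/-- For `Ω ⊆ I × J` with `|I| = |J| = r+1`, the residues of the variables `Z_Ω` modulo the
ideal of `(r+1)`-minors are algebraically dependent over `k` iff `Ω = I × J`. -/
theorem dep_small_block_iff {k : Type*} [Field k] [Infinite k] {m n r : ℕ}
    (hrm : r < m) (hrn : r < n)
    (I : Finset (Fin m)) (J : Finset (Fin n)) (Ω : Finset (Fin m × Fin n))
    (hI : I.card = r + 1) (hJ : J.card = r + 1) (hΩ : Ω ⊆ I ×ˢ J) :
    ¬ AlgebraicIndependent k
        (fun p : Ω => Ideal.Quotient.mk (detIdeal k m n r) (X p.val)) ↔ Ω = I ×ˢ J := by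
  constructor
  · intro hdep
    by_contra hne
    exact hdep (DepAux.indep_of_ne I J Ω hI hJ hΩ hne)
  · rintro rfl hind
    let eI : {x // x ∈ I} ≃ Fin (r + 1) := I.equivFin.trans (finCongr hI)
    let eJ : {x // x ∈ J} ≃ Fin (r + 1) := J.equivFin.trans (finCongr hJ)
    set f : Fin (r + 1) → Fin m := fun a => (eI.symm a).val with hf_def
    set g : Fin (r + 1) → Fin n := fun b => (eJ.symm b).val with hg_def
    have hf_inj : Function.Injective f := fun a b h => eI.symm.injective (Subtype.ext h)
    have hg_inj : Function.Injective g := fun a b h => eJ.symm.injective (Subtype.ext h)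
    have hmemIJ : ∀ i j, (f i, g j) ∈ I ×ˢ J := fun i j =>
      Finset.mem_product.mpr ⟨(eI.symm i).2, (eJ.symm j).2⟩
    set D' : MvPolynomial (I ×ˢ J : Finset (Fin m × Fin n)) k :=
      (Matrix.of fun i j => (X (⟨(f i, g j), hmemIJ i j⟩ : (I ×ˢ J : Finset (Fin m × Fin n))) :
        MvPolynomial (I ×ˢ J : Finset (Fin m × Fin n)) k)).det with hD'_def
    have hren : rename (Subtype.val : (I ×ˢ J : Finset (Fin m × Fin n)) → Fin m × Fin n) D'
        = (Matrix.of fun i j => (X (f i, g j) : MvPolynomial (Fin m × Fin n) k)).det := by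
      rw [hD'_def, AlgHom.map_det]
      congr 1
      ext i j
      simp
    have h0 : aeval (fun p : (I ×ˢ J : Finset (Fin m × Fin n)) =>
        Ideal.Quotient.mk (detIdeal k m n r) (X p.val)) D' = 0 := by
      rw [DepAux.aeval_mk_X, hren, Ideal.Quotient.eq_zero_iff_mem]
      exact Ideal.subset_span ⟨f, g, hf_inj, hg_inj, rfl⟩
    have hD0 := algebraicIndependent_iff.mp hind D' h0
    apply DepAux.det_X_ne_zero (k := k) hf_inj hg_inj
    rw [← hren, hD0, map_zero]
end

section
/- Let Z be an m × n matrix of variables, r < min(m,n), and Ω ⊆ [m] × [n]. Suppose I ⊆ [m] and J ⊆ [n] satisfy |I| > r, |J| > r, and |Ω ∩ (I × J)| > r(|I| + |J| − r). Then the elimination ideal I_{r+1}(Z) ∩ k[Z_Ω] is nonzero, i.e. Ω is a dependent set of the determinantal matroid M(r, [m] × [n]). -/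
open MvPolynomial

namespace DetAux

open Finset

/-- A finset of a product of orders is `ChainFree r` if it contains no strictly increasing
chain (in both coordinates) of length `r+1`. -/
def ChainFree (r : ℕ) {α β : Type*} [Preorder α] [Preorder β] (T : Finset (α × β)) : Prop :=
  ¬ ∃ f : Fin (r + 1) → α, ∃ g : Fin (r + 1) → β,
      StrictMono f ∧ StrictMono g ∧ ∀ l, (f l, g l) ∈ T

section Weight

variable {m n : ℕ}

/-- supermodular weight of a variable position -/
def w (x : Fin m × Fin n) : ℕ := (x.1.1 + 1) * (x.2.1 + 1)

/-- weight of a monomial -/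
def Wt (u : Fin m × Fin n →₀ ℕ) : ℕ := u.sum fun x e => e * w x

lemma Wt_add (u v : Fin m × Fin n →₀ ℕ) : Wt (u + v) = Wt u + Wt v :=
  Finsupp.sum_add_index' (fun _ => by simp) (fun _ b c => add_mul b c _)

lemma Wt_single (x : Fin m × Fin n) (e : ℕ) : Wt (Finsupp.single x e) = e * w x :=
  Finsupp.sum_single_index (by simp)

lemma Wt_sum {ι : Type*} (s : Finset ι) (p : ι → Fin m × Fin n) :
    Wt (∑ b ∈ s, Finsupp.single (p b) 1) = ∑ b ∈ s, w (p b) := by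
  classical
  induction s using Finset.induction with
  | empty => simp [Wt]
  | insert _ _ hx ih =>
    rw [Finset.sum_insert hx, Finset.sum_insert hx, Wt_add, Wt_single, ih, one_mul]

/-- The rearrangement inequality: for strictly monotone `f`, `g`, the aligned pairing has
strictly larger weight-sum than any other pairing. -/
lemma rearrange {N : ℕ} (f : Fin (N + 1) → Fin m) (g : Fin (N + 1) → Fin n)
    (hf : StrictMono f) (hg : StrictMono g) (σ : Equiv.Perm (Fin (N + 1))) (hσ : σ ≠ 1) :
    ∑ b, w (f (σ b), g b) < ∑ b, w (f b, g b) := by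
  classical
  set F : Equiv.Perm (Fin (N + 1)) → ℕ := fun τ => ∑ b, w (f (τ b), g b) with hF
  -- swapping a descent strictly increases F
  have swap_gain : ∀ (τ : Equiv.Perm (Fin (N + 1))) (i : Fin N),
      τ i.succ < τ i.castSucc → F τ < F (τ * Equiv.swap i.castSucc i.succ) := by
    intro τ i hlt
    have hij : (i.castSucc : Fin (N + 1)) ≠ i.succ := (Fin.castSucc_lt_succ (i := i)).ne
    have key : ∀ (ρ : Equiv.Perm (Fin (N + 1))),
        F ρ = ∑ b ∈ (Finset.univ.erase i.castSucc).erase i.succ, w (f (ρ b), g b)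
          + w (f (ρ i.castSucc), g i.castSucc) + w (f (ρ i.succ), g i.succ) := by
      intro ρ
      have h1 : (i.succ : Fin (N+1)) ∈ Finset.univ.erase i.castSucc :=
        Finset.mem_erase.2 ⟨hij.symm, Finset.mem_univ _⟩
      show ∑ b, w (f (ρ b), g b) = _
      rw [← Finset.sum_erase_add Finset.univ (fun b => w (f (ρ b), g b)) (Finset.mem_univ i.castSucc),
        ← Finset.sum_erase_add _ _ h1]
      omega
    have e1 : F (τ * Equiv.swap i.castSucc i.succ) =
        ∑ b ∈ (Finset.univ.erase i.castSucc).erase i.succ, w (f (τ b), g b)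
          + w (f (τ i.succ), g i.castSucc) + w (f (τ i.castSucc), g i.succ) := by
      rw [key]
      congr 2
      · apply Finset.sum_congr rfl
        intro b hb
        simp only [Finset.mem_erase] at hb
        obtain ⟨hb2, hb1, -⟩ := hb
        simp [Equiv.Perm.mul_apply, Equiv.swap_apply_of_ne_of_ne hb1 hb2]
      · simp [Equiv.Perm.mul_apply, Equiv.swap_apply_left]
      · simp [Equiv.Perm.mul_apply, Equiv.swap_apply_right]
    rw [e1, key τ]
    have hr : f (τ i.succ) < f (τ i.castSucc) := hf hlt
    have hc : g i.castSucc < g i.succ := hg (Fin.castSucc_lt_succ (i := i))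
    have : w (f (τ i.castSucc), g i.castSucc) + w (f (τ i.succ), g i.succ)
        < w (f (τ i.succ), g i.castSucc) + w (f (τ i.castSucc), g i.succ) := by
      have h1 : (f (τ i.succ)).1 < (f (τ i.castSucc)).1 := hr
      have h2 : (g i.castSucc).1 < (g i.succ).1 := hc
      simp only [w]
      nlinarith
    omega
  -- a permutation with no descent is the identity
  have mono_id : ∀ τ : Equiv.Perm (Fin (N + 1)),
      (∀ i : Fin N, τ i.castSucc < τ i.succ) → τ = 1 := by
    intro τ hmono
    have hsm : StrictMono τ := Fin.strictMono_iff_lt_succ.2 hmono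
    have : (τ : Fin (N+1) → Fin (N+1)) = id := by
      apply (StrictMono.range_inj hsm strictMono_id).1
      rw [Set.range_id]
      exact Set.range_eq_univ.mpr τ.surjective
    ext b
    exact congrArg Fin.val (congrFun this b)
  -- the maximizer of F is the identity
  obtain ⟨τs, -, hmax⟩ := Finset.exists_max_image Finset.univ F ⟨1, Finset.mem_univ 1⟩
  have hmax' : ∀ τ, F τ ≤ F τs := fun τ => hmax τ (Finset.mem_univ τ)
  -- any non-identity permutation has a descent, hence is not maximal and is strictly below F 1
  have descent : ∀ τ : Equiv.Perm (Fin (N + 1)), τ ≠ 1 →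
      ∃ i : Fin N, τ i.succ < τ i.castSucc := by
    intro τ hτ
    by_contra hno
    push_neg at hno
    apply hτ
    apply mono_id
    intro i
    rcases lt_or_eq_of_le (hno i) with h | h
    · exact h
    · exact absurd (τ.injective h) (Fin.castSucc_lt_succ (i := i)).ne
  have hτs : τs = 1 := by
    by_contra hne
    obtain ⟨i, hi⟩ := descent τs hne
    exact absurd (hmax' _) (not_le.2 (swap_gain τs i hi))
  obtain ⟨i, hi⟩ := descent σ hσ
  calc F σ < F (σ * Equiv.swap i.castSucc i.succ) := swap_gain σ i hi
    _ ≤ F τs := hmax' _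
    _ = F 1 := by rw [hτs]
    _ = ∑ b, w (f b, g b) := by simp [hF]

end Weight


section Reduce

open scoped Classical

variable {k : Type*} [Field k] {m n r : ℕ}

lemma prod_X_eq_monomial {ι : Type*} (s : Finset ι) (p : ι → Fin m × Fin n) :
    (∏ b ∈ s, (X (p b) : MvPolynomial (Fin m × Fin n) k))
      = monomial (∑ b ∈ s, Finsupp.single (p b) 1) 1 := by
  classical
  induction s using Finset.induction with
  | empty => simp
  | insert _ _ hx ih =>
    rw [Finset.prod_insert hx, Finset.sum_insert hx, ih, monomial_single_add]
    simp

/-- The finset of "standard" (chain-free) exponents supported in `I ×ˢ J` of total degree `d`. -/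
noncomputable def Bset (I : Finset (Fin m)) (J : Finset (Fin n)) (r d : ℕ) :
    Finset ((Fin m × Fin n) →₀ ℕ) :=
  ((I ×ˢ J).finsuppAntidiag d).filter (fun v => ChainFree r v.support)

/-- Straightening: every monomial supported in `I ×ˢ J` of degree `d` is, modulo the ideal of
minors, a linear combination of chain-free monomials supported in `I ×ˢ J` of degree `d`. -/
lemma reduce (I : Finset (Fin m)) (J : Finset (Fin n)) (d : ℕ) :
    ∀ (N : ℕ) (u : (Fin m × Fin n) →₀ ℕ), Wt u < N → u ∈ (I ×ˢ J).finsuppAntidiag d →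
    (monomial u (1 : k)) ∈
      Submodule.span k ((fun v => (monomial v (1 : k))) '' ↑(Bset I J r d))
        ⊔ (detIdeal k m n r).restrictScalars k := by
  intro N
  induction N with
  | zero => intro u hu; omega
  | succ N ih =>
    intro u hWu hu
    by_cases hcf : ChainFree r u.support
    · exact Submodule.mem_sup_left (Submodule.subset_span
        ⟨u, Finset.mem_coe.2 (Finset.mem_filter.2 ⟨hu, hcf⟩), rfl⟩)
    obtain ⟨f, g, hf, hg, hmem⟩ := not_not.mp hcf
    obtain ⟨husum, husupp⟩ := Finset.mem_finsuppAntidiag'.mp hu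
    have hinj : Function.Injective (fun b => ((f b, g b) : Fin m × Fin n)) :=
      fun a b hab => hf.injective (congrArg Prod.fst hab)
    set δ : (Fin m × Fin n) →₀ ℕ := ∑ b : Fin (r + 1), Finsupp.single (f b, g b) 1 with hδ
    have hδle : δ ≤ u := by
      rw [Finsupp.le_def]
      intro x
      rw [hδ, Finsupp.finset_sum_apply]
      by_cases hx : ∃ b, ((f b, g b) : Fin m × Fin n) = x
      · obtain ⟨b0, hb0⟩ := hx
        have hval : ∑ b : Fin (r + 1), (Finsupp.single ((f b, g b) : Fin m × Fin n) 1) x = 1 := by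
          rw [Finset.sum_eq_single b0]
          · rw [Finsupp.single_apply, if_pos hb0]
          · intro b _ hb
            rw [Finsupp.single_apply, if_neg]
            intro hc
            exact hb (hinj (hc.trans hb0.symm))
          · intro hb; exact absurd (Finset.mem_univ b0) hb
        rw [hval]
        have : x ∈ u.support := hb0 ▸ hmem b0
        rw [Finsupp.mem_support_iff] at this
        omega
      · push_neg at hx
        rw [Finset.sum_eq_zero]
        · exact Nat.zero_le _
        · intro b _
          rw [Finsupp.single_apply, if_neg (hx b)]
    set v : (Fin m × Fin n) →₀ ℕ := u - δ with hv
    have huv : v + δ = u := tsub_add_cancel_of_le hδle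
    have hfI : ∀ b, f b ∈ I := fun b => (Finset.mem_product.1 (husupp (hmem b))).1
    have hgJ : ∀ b, g b ∈ J := fun b => (Finset.mem_product.1 (husupp (hmem b))).2
    set uσ : Equiv.Perm (Fin (r + 1)) → ((Fin m × Fin n) →₀ ℕ) :=
      fun σ => ∑ b : Fin (r + 1), Finsupp.single (f (σ b), g b) 1 with huσ
    have hδ1 : δ = uσ 1 := by rw [hδ, huσ]; simp
    have hsupσ : ∀ σ, (uσ σ).support ⊆ I ×ˢ J := by
      intro σ
      refine subset_trans Finsupp.support_finset_sum ?_
      intro x hx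
      obtain ⟨b, -, hb⟩ := Finset.mem_biUnion.1 hx
      have := Finsupp.support_single_subset hb
      rw [Finset.mem_singleton] at this
      subst this
      exact Finset.mem_product.2 ⟨hfI _, hgJ _⟩
    have hsumσ : ∀ σ, (uσ σ).sum (fun _ e => e) = r + 1 := by
      intro σ
      rw [huσ, ← Finsupp.sum_finset_sum_index (fun _ => rfl) (fun _ _ _ => rfl)]
      simp [Finsupp.sum_single_index]
    have hWσ : ∀ σ, σ ≠ 1 → Wt (uσ σ) < Wt δ := by
      intro σ hσ
      rw [hδ, huσ, Wt_sum, Wt_sum]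
      exact rearrange f g hf hg σ hσ
    have hantidiag : ∀ σ, (v + uσ σ) ∈ (I ×ˢ J).finsuppAntidiag d := by
      intro σ
      rw [Finset.mem_finsuppAntidiag']
      constructor
      · rw [Finsupp.sum_add_index' (fun _ => rfl) (fun _ _ _ => rfl), hsumσ]
        have h2 : u.sum (fun _ e => e) = v.sum (fun _ e => e) + δ.sum (fun _ e => e) := by
          rw [← huv, Finsupp.sum_add_index' (fun _ => rfl) (fun _ _ _ => rfl)]
        have h3 : δ.sum (fun _ e => e) = r + 1 := by rw [hδ1]; exact hsumσ 1
        omega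
      · refine subset_trans Finsupp.support_add ?_
        refine Finset.union_subset (subset_trans ?_ husupp) (hsupσ σ)
        rw [hv]
        exact Finsupp.support_tsub
    -- the minor
    set Mm : Matrix (Fin (r + 1)) (Fin (r + 1)) (MvPolynomial (Fin m × Fin n) k) :=
      Matrix.of fun i j => (X (f i, g j) : MvPolynomial (Fin m × Fin n) k) with hMm
    have hdetmem : Mm.det ∈ detIdeal k m n r :=
      Ideal.subset_span ⟨f, g, hf.injective, hg.injective, rfl⟩
    have hkey : (monomial v (1 : k)) * Mm.det
        = ∑ σ : Equiv.Perm (Fin (r + 1)),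
            (((Equiv.Perm.sign σ : ℤ) : MvPolynomial (Fin m × Fin n) k)
              * monomial (v + uσ σ) (1 : k)) := by
      rw [Matrix.det_apply', Finset.mul_sum]
      refine Finset.sum_congr rfl fun σ _ => ?_
      have hprod : (∏ i, Mm (σ i) i) = monomial (uσ σ) (1 : k) := by
        rw [huσ, ← prod_X_eq_monomial]
        rfl
      rw [hprod, mul_left_comm, monomial_mul, one_mul]
    have hsplit : (monomial u (1 : k))
        = (monomial v (1 : k)) * Mm.det
          - ∑ σ ∈ Finset.univ.erase (1 : Equiv.Perm (Fin (r + 1))),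
              (((Equiv.Perm.sign σ : ℤ) : MvPolynomial (Fin m × Fin n) k)
                * monomial (v + uσ σ) (1 : k)) := by
      rw [hkey, ← Finset.sum_erase_add _ _ (Finset.mem_univ (1 : Equiv.Perm (Fin (r + 1))))]
      rw [Equiv.Perm.sign_one]
      push_cast
      rw [one_mul, ← hδ1, huv]
      ring
    rw [hsplit]
    refine Submodule.sub_mem _ ?_ ?_
    · exact Submodule.mem_sup_right ((Submodule.restrictScalars_mem _ _ _).2
        (Ideal.mul_mem_left _ _ hdetmem))
    · refine Submodule.sum_mem _ ?_
      intro σ hσe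
      have hσ1 : σ ≠ 1 := (Finset.mem_erase.1 hσe).1
      have hWlt : Wt (v + uσ σ) < N := by
        have h1 : Wt (v + uσ σ) = Wt v + Wt (uσ σ) := Wt_add _ _
        have h2 : Wt u = Wt v + Wt δ := by rw [← huv, Wt_add]
        have := hWσ σ hσ1
        omega
      have hIH := ih (v + uσ σ) hWlt (hantidiag σ)
      rcases Int.units_eq_one_or (Equiv.Perm.sign σ) with hs | hs <;> rw [hs] <;> push_cast
      · rw [one_mul]; exact hIH
      · rw [neg_one_mul]; exact Submodule.neg_mem _ hIH

end Reduce


section Grid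

variable {r : ℕ}

lemma arith_key (c s : ℕ) (h : 2 * s + 2 ≤ c) :
    s * (c - s) + (c - 1 - 2 * s) = (s + 1) * (c - (s + 1)) := by
  zify [show s ≤ c by omega, show 2 * s ≤ c - 1 by omega, show 1 ≤ c by omega,
    show s + 1 ≤ c by omega]
  ring

lemma arith_sum (a b r : ℕ) (ha : r ≤ a) (hb : r ≤ b) :
    ∑ t ∈ Finset.range r, (a + b - 1 - 2 * t) = r * (a + b - r) := by
  induction r with
  | zero => simp
  | succ s ih =>
    rw [Finset.sum_range_succ, ih (by omega) (by omega)]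
    exact arith_key (a + b) s (by omega)

lemma grid_bound {a b : ℕ} (ha : r < a) (hb : r < b) (T : Finset (Fin a × Fin b))
    (hcf : ChainFree r T) : T.card ≤ r * (a + b - r) := by
  classical
  set c : Fin a × Fin b → ℤ := fun p => (p.1.1 : ℤ) - (p.2.1 : ℤ) with hc
  set fib : ℤ → Finset (Fin a × Fin b) := fun z => T.filter (fun p => c p = z) with hfib
  have hfst_inj : ∀ z : ℤ, Set.InjOn Prod.fst ((fib z : Finset (Fin a × Fin b)) : Set (Fin a × Fin b)) := by
    intro z p hp q hq hpq
    simp only [hfib, hc, Finset.coe_filter, Set.mem_setOf_eq] at hp hq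
    have h1 : (p.2.1 : ℤ) = (q.2.1 : ℤ) := by
      have h0 : (p.1.1 : ℤ) = (q.1.1 : ℤ) := by rw [hpq]
      have := hp.2; have := hq.2
      omega
    have h2 : p.2 = q.2 := Fin.ext (by exact_mod_cast h1)
    exact Prod.ext hpq h2
  have stepA : ∀ z : ℤ, (fib z).card ≤ r := by
    intro z
    by_contra hlt
    push_neg at hlt
    set Fi : Finset (Fin a) := (fib z).image Prod.fst with hFi
    have hFicard : Fi.card = (fib z).card := Finset.card_image_of_injOn (hfst_inj z)
    obtain ⟨S, hSsub, hScard⟩ := Finset.exists_subset_card_eq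
      (show r + 1 ≤ Fi.card by omega)
    set f' : Fin (r + 1) ↪o Fin a := S.orderEmbOfFin hScard with hf'
    have hex : ∀ l, ∃ q : Fin b, (f' l, q) ∈ fib z := by
      intro l
      have h1 : f' l ∈ Fi := hSsub (Finset.orderEmbOfFin_mem S hScard l)
      obtain ⟨p, hp, hp1⟩ := Finset.mem_image.1 h1
      refine ⟨p.2, ?_⟩
      rw [← hp1]
      exact hp
    choose g' hg' using hex
    have hgmono : StrictMono g' := by
      intro l l' hll
      have h1 := (Finset.mem_filter.1 (hg' l)).2
      have h2 := (Finset.mem_filter.1 (hg' l')).2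
      have h3 : (f' l : Fin a) < f' l' := f'.strictMono hll
      have h4 : ((f' l : Fin a) : ℕ) < ((f' l' : Fin a) : ℕ) := h3
      simp only [hc] at h1 h2
      have : ((g' l : Fin b) : ℕ) < ((g' l' : Fin b) : ℕ) := by omega
      exact this
    exact hcf ⟨fun l => f' l, g', f'.strictMono, hgmono,
      fun l => (Finset.mem_filter.1 (hg' l)).1⟩
  have stepB : ∀ z : ℤ, ∀ t : ℕ, t < (fib z).card →
      (t : ℤ) + 1 - b ≤ z ∧ z ≤ (a : ℤ) - 1 - t := by
    intro z t ht
    set Fi : Finset (Fin a) := (fib z).image Prod.fst with hFi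
    have hFicard : Fi.card = (fib z).card := Finset.card_image_of_injOn (hfst_inj z)
    have hne : Fi.Nonempty := Finset.card_pos.1 (by omega)
    set lo := Fi.min' hne with hlo
    set hi := Fi.max' hne with hhi
    have hsub : Fi.image Fin.val ⊆ Finset.Icc lo.1 hi.1 := by
      intro x hx
      obtain ⟨y, hy, hxy⟩ := Finset.mem_image.1 hx
      subst hxy
      exact Finset.mem_Icc.2 ⟨Fi.min'_le y hy, Fi.le_max' y hy⟩
    have hcard2 : t + 1 ≤ hi.1 + 1 - lo.1 := by
      have h1 : (Fi.image Fin.val).card = Fi.card :=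
        Finset.card_image_of_injective _ Fin.val_injective
      have h2 := Finset.card_le_card hsub
      rw [Nat.card_Icc] at h2
      omega
    obtain ⟨ph, hph, hph1⟩ := Finset.mem_image.1 (Fi.max'_mem hne)
    obtain ⟨pl, hpl, hpl1⟩ := Finset.mem_image.1 (Fi.min'_mem hne)
    have hzh : (ph.1.1 : ℤ) - ph.2.1 = z := (Finset.mem_filter.1 hph).2
    have hzl : (pl.1.1 : ℤ) - pl.2.1 = z := (Finset.mem_filter.1 hpl).2
    have e1 : ph.1.1 = hi.1 := by rw [hph1]
    have e2 : pl.1.1 = lo.1 := by rw [hpl1]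
    have hb1 : ph.2.1 ≤ b - 1 := by omega
    have hb2 : hi.1 ≤ a - 1 := by
      have := ph.1.2; omega
    have hl0 : (0 : ℤ) ≤ pl.2.1 := by positivity
    omega
  have hcardT : T.card = ∑ z ∈ T.image c, (fib z).card :=
    Finset.card_eq_sum_card_fiberwise (fun x hx => Finset.mem_image_of_mem c hx)
  have hexch : ∀ z ∈ T.image c,
      (fib z).card = ∑ t ∈ Finset.range r, (if t < (fib z).card then 1 else 0) := by
    intro z hz
    rw [← Finset.card_filter]
    have he : (Finset.range r).filter (fun t => t < (fib z).card)
        = Finset.range ((fib z).card) := by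
      ext t
      simp only [Finset.mem_filter, Finset.mem_range]
      have := stepA z
      omega
    rw [he, Finset.card_range]
  rw [hcardT, Finset.sum_congr rfl hexch, Finset.sum_comm]
  have hper : ∀ t ∈ Finset.range r,
      (∑ z ∈ T.image c, (if t < (fib z).card then 1 else 0)) ≤ a + b - 1 - 2 * t := by
    intro t ht
    rw [← Finset.card_filter]
    have hsub : (T.image c).filter (fun z => t < (fib z).card)
        ⊆ Finset.Icc ((t : ℤ) + 1 - b) ((a : ℤ) - 1 - t) := by
      intro z hz
      obtain ⟨hz1, hz2⟩ := Finset.mem_filter.1 hz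
      obtain ⟨hA, hB⟩ := stepB z t hz2
      exact Finset.mem_Icc.2 ⟨hA, hB⟩
    have h2 := Finset.card_le_card hsub
    rw [Int.card_Icc] at h2
    have ht' : t < r := Finset.mem_range.1 ht
    omega
  calc ∑ t ∈ Finset.range r, ∑ z ∈ T.image c, (if t < (fib z).card then 1 else 0)
      ≤ ∑ t ∈ Finset.range r, (a + b - 1 - 2 * t) := Finset.sum_le_sum hper
    _ = r * (a + b - r) := arith_sum a b r (le_of_lt ha) (le_of_lt hb)

lemma chainfree_card_le {m n : ℕ} {I : Finset (Fin m)} {J : Finset (Fin n)}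
    (hI : r < I.card) (hJ : r < J.card) {T : Finset (Fin m × Fin n)}
    (hT : T ⊆ I ×ˢ J) (hcf : ChainFree r T) :
    T.card ≤ r * (I.card + J.card - r) := by
  classical
  set eI : Fin I.card ↪o Fin m := I.orderEmbOfFin rfl with heI
  set eJ : Fin J.card ↪o Fin n := J.orderEmbOfFin rfl with heJ
  set T' : Finset (Fin I.card × Fin J.card) :=
    Finset.univ.filter (fun p => ((eI p.1, eJ p.2) : Fin m × Fin n) ∈ T) with hT'
  have hcard : T.card = T'.card := by
    rw [eq_comm]
    apply Finset.card_bij (fun p _ => ((eI p.1, eJ p.2) : Fin m × Fin n))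
    · intro p hp
      exact (Finset.mem_filter.1 hp).2
    · intro p hp q hq hpq
      have h1 : eI p.1 = eI q.1 := congrArg Prod.fst hpq
      have h2 : eJ p.2 = eJ q.2 := congrArg Prod.snd hpq
      exact Prod.ext (eI.injective h1) (eJ.injective h2)
    · intro x hx
      have hx1 : x.1 ∈ I := (Finset.mem_product.1 (hT hx)).1
      have hx2 : x.2 ∈ J := (Finset.mem_product.1 (hT hx)).2
      have h1 : x.1 ∈ Set.range eI := by rw [Finset.range_orderEmbOfFin]; exact hx1
      have h2 : x.2 ∈ Set.range eJ := by rw [Finset.range_orderEmbOfFin]; exact hx2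
      obtain ⟨p1, hp1⟩ := h1
      obtain ⟨p2, hp2⟩ := h2
      refine ⟨(p1, p2), ?_, ?_⟩
      · apply Finset.mem_filter.2
        refine ⟨Finset.mem_univ _, ?_⟩
        show ((eI p1, eJ p2) : Fin m × Fin n) ∈ T
        rw [hp1, hp2]
        exact (show ((x.1, x.2) : Fin m × Fin n) = x from rfl) ▸ hx
      · show ((eI p1, eJ p2) : Fin m × Fin n) = x
        rw [hp1, hp2]
  have hcf' : ChainFree r T' := by
    rintro ⟨f, g, hf, hg, hmem⟩
    exact hcf ⟨fun l => eI (f l), fun l => eJ (g l), eI.strictMono.comp hf,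
      eJ.strictMono.comp hg, fun l => (Finset.mem_filter.1 (hmem l)).2⟩
  rw [hcard]
  exact grid_bound hI hJ T' hcf' 

end Grid


section Count

lemma card_tuple (a d : ℕ) : (Finset.Nat.antidiagonalTuple a d).card = (a + d - 1).choose d := by
  classical
  have e0 : {x : Fin a → ℕ // ∑ i, x i = d} ≃ Sym (Fin a) d := by
    refine Equiv.subtypeEquiv
      ((Finsupp.equivFunOnFinite.symm : (Fin a → ℕ) ≃ (Fin a →₀ ℕ)).trans
        Multiset.toFinsupp.toEquiv.symm) (fun x => ?_)
    have hcard : Multiset.card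
        (Multiset.toFinsupp.symm (Finsupp.equivFunOnFinite.symm x)) = ∑ i, x i := by
      rw [Multiset.toFinsupp_symm_apply, Finsupp.card_toMultiset,
        Finsupp.sum_fintype _ _ (fun _ => rfl)]
      simp
    show ∑ i, x i = d ↔ Multiset.card
        (Multiset.toFinsupp.symm (Finsupp.equivFunOnFinite.symm x)) = d
    rw [hcard]
  have E : {x // x ∈ Finset.Nat.antidiagonalTuple a d} ≃ Sym (Fin a) d :=
    (Equiv.subtypeEquivRight (fun x => Finset.Nat.mem_antidiagonalTuple)).trans e0
  rw [← Fintype.card_coe, Fintype.card_congr E, Sym.card_sym_eq_multichoose, Fintype.card_fin,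
    Nat.multichoose_eq]

end Count


section BCard

lemma Bset_card_le {m n r : ℕ} {I : Finset (Fin m)} {J : Finset (Fin n)} (d : ℕ)
    (hI : r < I.card) (hJ : r < J.card) :
    (Bset I J r d).card ≤ 2 ^ (m * n) * (r * (I.card + J.card - r) + d - 1).choose d := by
  classical
  set t' := r * (I.card + J.card - r) with ht'
  have hmaps : ∀ u ∈ Bset I J r d, u.support ∈ (I ×ˢ J).powerset := by
    intro u hu
    exact Finset.mem_powerset.2
      ((Finset.mem_finsuppAntidiag.1 (Finset.mem_filter.1 hu).1).2)
  rw [Finset.card_eq_sum_card_fiberwise hmaps]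
  have hfiber : ∀ T ∈ (I ×ˢ J).powerset,
      ((Bset I J r d).filter (fun u => u.support = T)).card ≤ (t' + d - 1).choose d := by
    intro T hT
    rcases Finset.eq_empty_or_nonempty ((Bset I J r d).filter (fun u => u.support = T)) with he | hne
    · rw [he]; simp
    obtain ⟨u0, hu0⟩ := hne
    have hu0f := Finset.mem_filter.1 hu0
    have hcf : ChainFree r T := hu0f.2 ▸ (Finset.mem_filter.1 hu0f.1).2
    have hTsub : T ⊆ I ×ˢ J := Finset.mem_powerset.1 hT
    have hTcard : T.card ≤ t' := chainfree_card_le hI hJ hTsub hcf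
    have hinj : ((Bset I J r d).filter (fun u => u.support = T)).card
        ≤ (Finset.Nat.antidiagonalTuple T.card d).card := by
      apply Finset.card_le_card_of_injOn
        (fun u => (fun p : Fin T.card => u ((T.equivFin.symm p) : Fin m × Fin n)))
      · intro u hu
        have huf := Finset.mem_filter.1 hu
        have hsupp : u.support = T := huf.2
        have hsum : (I ×ˢ J).sum ⇑u = d := (Finset.mem_finsuppAntidiag.1
          (Finset.mem_filter.1 huf.1).1).1
        rw [Finset.mem_coe, Finset.Nat.mem_antidiagonalTuple]
        have h1 : ∑ p : Fin T.card, u ((T.equivFin.symm p) : Fin m × Fin n)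
            = ∑ x : {x // x ∈ T}, u x := Equiv.sum_comp T.equivFin.symm (fun x => u x)
        rw [h1, Finset.sum_coe_sort T (fun x => u x)]
        rw [← Finset.sum_subset hTsub (fun x _ hx => ?_)] at hsum
        · exact hsum
        · rw [← hsupp] at hx
          exact Finsupp.notMem_support_iff.1 hx
      · intro u hu u' hu' huu
        have hsu : u.support = T := (Finset.mem_filter.1 hu).2
        have hsu' : u'.support = T := (Finset.mem_filter.1 hu').2
        ext x
        by_cases hx : x ∈ T
        · have := congrFun huu (T.equivFin ⟨x, hx⟩)
          simpa using this
        · have h1 : u x = 0 := Finsupp.notMem_support_iff.1 (by rw [hsu]; exact hx)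
          have h2 : u' x = 0 := Finsupp.notMem_support_iff.1 (by rw [hsu']; exact hx)
          rw [h1, h2]
    refine le_trans hinj ?_
    rw [card_tuple]
    exact Nat.choose_le_choose d (by omega)
  calc ∑ T ∈ (I ×ˢ J).powerset, ((Bset I J r d).filter (fun u => u.support = T)).card
      ≤ ∑ _T ∈ (I ×ˢ J).powerset, (t' + d - 1).choose d := Finset.sum_le_sum hfiber
    _ = 2 ^ ((I ×ˢ J).card) * (t' + d - 1).choose d := by
        rw [Finset.sum_const, Finset.card_powerset, smul_eq_mul]
    _ ≤ 2 ^ (m * n) * (t' + d - 1).choose d := by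
        apply Nat.mul_le_mul_right
        apply Nat.pow_le_pow_right (by norm_num)
        rw [Finset.card_product]
        calc I.card * J.card ≤ m * J.card :=
              Nat.mul_le_mul_right _ (by simpa using Finset.card_le_card I.subset_univ)
          _ ≤ m * n := Nat.mul_le_mul_left _ (by simpa using Finset.card_le_card J.subset_univ)

lemma binom_key (t' K : ℕ) (ht' : 1 ≤ t') :
    K * (t' + K * t' - 1).choose (K * t') < (t' + K * t').choose (K * t') := by
  set d := K * t' with hd
  have e1 : (t' + d).choose d = (t' + d).choose t' := by
    have := Nat.choose_symm (show t' ≤ t' + d by omega)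
    rw [show t' + d - t' = d by omega] at this
    exact this
  have e2 : (t' + d - 1).choose d = (t' + d - 1).choose (t' - 1) := by
    have := Nat.choose_symm (show d ≤ t' + d - 1 by omega)
    rw [show t' + d - 1 - d = t' - 1 by omega] at this
    exact this.symm
  have e3 : (t' + d - 1).succ * (t' + d - 1).choose (t' - 1)
      = (t' + d - 1).succ.choose (t' - 1).succ * (t' - 1).succ :=
    Nat.add_one_mul_choose_eq (t' + d - 1) (t' - 1)
  rw [show (t' + d - 1).succ = t' + d by omega, show (t' - 1).succ = t' by omega] at e3
  have key : t' * ((t' + d).choose d) = (t' + d) * ((t' + d - 1).choose d) := by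
    rw [e1, e2, e3]; ring
  have hpos : 0 < (t' + d - 1).choose d := Nat.choose_pos (by omega)
  have hXY : (t' + d).choose d = (K + 1) * ((t' + d - 1).choose d) := by
    apply Nat.eq_of_mul_eq_mul_left (show 0 < t' by omega)
    rw [key, hd]; ring
  rw [hXY]
  have := hpos
  nlinarith

end BCard

end DetAux

/-- If `|I| > r`, `|J| > r` and `|Ω ∩ (I × J)| > r(|I| + |J| - r)`, then the elimination ideal
`I_{r+1}(Z) ∩ k[Z_Ω]` is nonzero, i.e. `Ω` is dependent in the determinantal matroid. -/
theorem dep_of_size {k : Type*} [Field k] [Infinite k] {m n r : ℕ}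
    (hrm : r < m) (hrn : r < n)
    (Ω : Finset (Fin m × Fin n)) (I : Finset (Fin m)) (J : Finset (Fin n))
    (hI : r < I.card) (hJ : r < J.card)
    (h : r * (I.card + J.card - r) < (Ω ∩ I ×ˢ J).card) :
    ∃ f ∈ detIdeal k m n r, f ≠ 0 ∧ f ∈ MvPolynomial.supported k (↑Ω : Set (Fin m × Fin n)) := by
  classical
  open DetAux in
  rcases Nat.eq_zero_or_pos r with hr0 | hrpos
  · subst hr0
    have hne : (Ω ∩ I ×ˢ J).Nonempty := Finset.card_pos.1 (by omega)
    obtain ⟨ω, hω⟩ := hne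
    refine ⟨X ω, ?_, MvPolynomial.X_ne_zero ω, ?_⟩
    · apply Ideal.subset_span
      refine ⟨fun _ => ω.1, fun _ => ω.2,
        fun p q _ => Fin.ext (by omega), fun p q _ => Fin.ext (by omega), ?_⟩
      rw [Matrix.det_fin_one]
      rfl
    · exact MvPolynomial.X_mem_supported.2
        (Finset.mem_coe.2 (Finset.mem_inter.1 hω).1)
  · set a := I.card with ha
    set b := J.card with hb
    set t' := r * (a + b - r) with ht'
    have ht'pos : 1 ≤ t' := Nat.one_le_iff_ne_zero.2 (Nat.mul_ne_zero (by omega) (by omega))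
    set K := 2 ^ (m * n) with hK
    set d := K * t' with hd
    set Ω' := Ω ∩ I ×ˢ J with hΩ'
    have hΩsub : Ω' ⊆ I ×ˢ J := Finset.inter_subset_right
    have hΩΩ : Ω' ⊆ Ω := Finset.inter_subset_left
    set s := Ω'.card with hs
    have hst : t' + 1 ≤ s := h
    -- the injective family of exponents indexed by tuples
    set y : Fin s → Fin m × Fin n := fun p => (Ω'.equivFin.symm p : Fin m × Fin n) with hy
    have hyinj : Function.Injective y :=
      fun p q hpq => Ω'.equivFin.symm.injective (Subtype.ext hpq)
    have hyΩ : ∀ p, y p ∈ Ω' := fun p => (Ω'.equivFin.symm p).2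
    set uu : (Fin s → ℕ) → ((Fin m × Fin n) →₀ ℕ) :=
      fun t => ∑ p, Finsupp.single (y p) (t p) with huu
    have happ : ∀ t p, uu t (y p) = t p := by
      intro t p
      rw [huu, Finsupp.finset_sum_apply]
      rw [Finset.sum_eq_single p]
      · rw [Finsupp.single_apply, if_pos rfl]
      · intro q _ hq
        rw [Finsupp.single_apply, if_neg (fun hc => hq (hyinj hc))]
      · intro hp; exact absurd (Finset.mem_univ p) hp
    have huuinj : Function.Injective uu := by
      intro t t' htt
      funext p
      rw [← happ t p, ← happ t' p, htt]
    have hsupp : ∀ t, (uu t).support ⊆ Ω' := by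
      intro t
      rw [huu]
      refine subset_trans Finsupp.support_finset_sum ?_
      intro x hx
      obtain ⟨p, -, hp⟩ := Finset.mem_biUnion.1 hx
      have := Finsupp.support_single_subset hp
      rw [Finset.mem_singleton] at this
      exact this ▸ hyΩ p
    have hmemA : ∀ t : Fin s → ℕ, (∑ i, t i = d) → uu t ∈ (I ×ˢ J).finsuppAntidiag d := by
      intro t ht
      rw [Finset.mem_finsuppAntidiag']
      constructor
      · rw [huu, ← Finsupp.sum_finset_sum_index (fun _ => rfl) (fun _ _ _ => rfl)]
        rw [← ht]
        exact Finset.sum_congr rfl (fun p _ => Finsupp.sum_single_index rfl)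
      · exact subset_trans (hsupp t) hΩsub
    by_contra hcon
    push_neg at hcon
    set P := MvPolynomial (Fin m × Fin n) k with hP
    set Mod := (detIdeal k m n r).restrictScalars k with hMod
    set π := Mod.mkQ with hπ
    set A := Finset.Nat.antidiagonalTuple s d with hA
    set fam : {x // x ∈ A} → P := fun t => monomial (uu t.1) 1 with hfam
    have hfam_ind : LinearIndependent k fam := by
      have hBind := (basisMonomials (Fin m × Fin n) k).linearIndependent
      have h2 := hBind.comp (fun t : {x // x ∈ A} => uu t.1)
        (fun t t' htt => Subtype.ext (huuinj htt))
      have h3 : (⇑(basisMonomials (Fin m × Fin n) k) ∘ fun t : {x // x ∈ A} => uu t.1) = fam := by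
        funext t
        rw [Function.comp_apply, coe_basisMonomials]
      rwa [h3] at h2
    have hsuppfam : ∀ t : {x // x ∈ A}, fam t ∈ MvPolynomial.supported k (↑Ω : Set (Fin m × Fin n)) := by
      intro t
      rw [hfam, MvPolynomial.mem_supported, MvPolynomial.vars_monomial one_ne_zero]
      exact subset_trans (Finset.coe_subset.2 (subset_trans (hsupp t.1) hΩΩ)) subset_rfl
    have hπfam_ind : LinearIndependent k (⇑π ∘ fam) := by
      apply hfam_ind.map
      rw [Submodule.disjoint_def]
      intro x hx1 hx2
      rw [Submodule.ker_mkQ] at hx2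
      have hxideal : x ∈ detIdeal k m n r := hx2
      have hxsupp : x ∈ MvPolynomial.supported k (↑Ω : Set (Fin m × Fin n)) := by
        have hle : Submodule.span k (Set.range fam)
            ≤ Subalgebra.toSubmodule (MvPolynomial.supported k (↑Ω : Set (Fin m × Fin n))) := by
          rw [Submodule.span_le]
          rintro z ⟨t, rfl⟩
          exact hsuppfam t
        exact hle hx1
      by_contra hx0
      exact hcon x hxideal hx0 hxsupp
    set BQ : Finset (P ⧸ Mod) := (Bset I J r d).image (fun v => π (monomial v (1 : k))) with hBQ
    set W := Submodule.span k (↑BQ : Set (P ⧸ Mod)) with hW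
    have hWfin : FiniteDimensional k W := FiniteDimensional.span_of_finite k (BQ.finite_toSet)
    have hmemW : ∀ t : {x // x ∈ A}, π (fam t) ∈ W := by
      intro t
      have hred := reduce (k := k) (r := r) I J d (Wt (uu t.1) + 1) (uu t.1)
        (Nat.lt_succ_self _) (hmemA t.1 (Finset.Nat.mem_antidiagonalTuple.1 t.2))
      obtain ⟨xg, hxg, xm, hxm, hsum2⟩ := Submodule.mem_sup.1 hred
      have hπ0 : π xm = 0 := by
        rw [hπ, Submodule.mkQ_apply, Submodule.Quotient.mk_eq_zero]
        exact hxm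
      have he : π (fam t) = π xg := by
        rw [hfam]
        show π (monomial (uu t.1) 1) = π xg
        rw [← hsum2, map_add, hπ0, add_zero]
      rw [he]
      have hmap : π xg ∈ Submodule.map π
          (Submodule.span k ((fun v => monomial v (1 : k)) '' ↑(Bset I J r d))) :=
        Submodule.mem_map_of_mem hxg
      rw [Submodule.map_span] at hmap
      have hseteq : (⇑π '' ((fun v => monomial v (1 : k)) '' ↑(Bset I J r d)))
          = (↑BQ : Set (P ⧸ Mod)) := by
        rw [hBQ, Finset.coe_image, ← Set.image_comp]
        rfl
      rwa [hseteq] at hmap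
    set fam' : {x // x ∈ A} → W := fun t => ⟨π (fam t), hmemW t⟩ with hfam'
    have hfam'_ind : LinearIndependent k fam' := by
      apply LinearIndependent.of_comp W.subtype
      exact hπfam_ind
    have hcard1 : Fintype.card {x // x ∈ A} ≤ Module.finrank k W :=
      hfam'_ind.fintype_card_le_finrank
    have hrankW : Module.finrank k W ≤ BQ.card := by
      have h4 := finrank_span_le_card (R := k) (↑BQ : Set (P ⧸ Mod))
      simpa using h4
    have hAcard : A.card = (s + d - 1).choose d := card_tuple s d
    have hBle : BQ.card ≤ (Bset I J r d).card := Finset.card_image_le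
    have hBcard : (Bset I J r d).card ≤ K * (t' + d - 1).choose d :=
      Bset_card_le d hI hJ
    have hbin : K * (t' + d - 1).choose d < (t' + d).choose d := by
      rw [hd]; exact binom_key t' K ht'pos
    have hmono : (t' + d).choose d ≤ (s + d - 1).choose d :=
      Nat.choose_le_choose d (by omega)
    rw [Fintype.card_coe] at hcard1
    omega
end

section
/- Let m = n = 9 and r = 4. For the set Ω ⊆ [9] × [9] whose incidence matrix has rows (0,0,0,1,1,1,1,1,1), (0,0,1,1,0,1,1,1,1), (0,1,1,0,1,1,0,1,1), (1,1,0,0,1,0,1,1,1), (1,0,1,1,1,0,1,0,1), (1,1,1,0,0,1,1,0,1), (1,1,0,1,1,1,0,0,1), (1,1,1,1,0,0,0,1,1), (1,1,1,1,1,1,1,1,0), there is no partition [9] = J_1 ∪ J_2 ∪ J_3 ∪ J_4 into four disjoint sets such that for each ℓ, the set Ω ∩ ([9] × J_ℓ) satisfies: for all I ⊆ [9] with |I| > 4, the sum over j ∈ J_ℓ of max(|Ω ∩ (I × {j})| − 4, 0) is at most |I| − 4, with equality when I = [9]. -/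
/-- The incidence matrix of the anti-diagonal base from Example 3.1 of the paper. -/
def exampleMatrix : Matrix (Fin 9) (Fin 9) ℕ :=
  !![0,0,0,1,1,1,1,1,1;
     0,0,1,1,0,1,1,1,1;
     0,1,1,0,1,1,0,1,1;
     1,1,0,0,1,0,1,1,1;
     1,0,1,1,1,0,1,0,1;
     1,1,1,0,0,1,1,0,1;
     1,1,0,1,1,1,0,0,1;
     1,1,1,1,0,0,0,1,1;
     1,1,1,1,1,1,1,1,0]

/-- The subset `Ω ⊆ [9] × [9]` given by the incidence matrix. -/
def exampleOmega : Finset (Fin 9 × Fin 9) :=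
  Finset.univ.filter (fun p => exampleMatrix p.1 p.2 = 1)

lemma col_even : ∀ j : Fin 9, Even ((exampleOmega.filter fun p => p.2 = j).card - 4) := by
  decide

/-- There is no partition `[9] = J_1 ∪ J_2 ∪ J_3 ∪ J_4` such that each `Ω ∩ ([9] × J_ℓ)`
is a relaxed `(1,4,9)`-SLMF: i.e. for all `I ⊆ [9]` with `|I| > 4`,
`∑_{j ∈ J_ℓ} max(|Ω ∩ (I × {j})| - 4, 0) ≤ |I| - 4`, with equality for `I = [9]`. -/
theorem no_SLMF_partition :
    ¬ ∃ Js : Fin 4 → Finset (Fin 9),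
      (∀ j : Fin 9, ∃! ℓ : Fin 4, j ∈ Js ℓ) ∧
      ∀ ℓ : Fin 4,
        (∀ I : Finset (Fin 9), 4 < I.card →
          (∑ j ∈ Js ℓ, ((exampleOmega.filter fun p => p.1 ∈ I ∧ p.2 = j).card - 4))
            ≤ I.card - 4) ∧
        (∑ j ∈ Js ℓ, ((exampleOmega.filter fun p => p.2 = j).card - 4))
          = (Finset.univ : Finset (Fin 9)).card - 4 := by
  rintro ⟨Js, -, h⟩
  have heq := (h 0).2
  have heven : Even (∑ j ∈ Js 0, ((exampleOmega.filter fun p => p.2 = j).card - 4)) :=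
    Finset.even_sum _ (fun j _ => col_even j)
  rw [heq] at heven
  simp [Finset.card_univ] at heven
  exact absurd heven (by decide)
end

section
/- Let Z be a 4 × 4 matrix of variables and I_3(Z) the ideal of 3-minors. Let Ω = {(i,j) ∈ [4] × [4] : i ≠ j} (the complement of the diagonal). Define p = z_{11}²(z_{23}z_{42}z_{34} − z_{24}z_{32}z_{43}) + z_{11}·p_1 + p_2, where p_1 = −z_{21}z_{13}z_{42}z_{34} − z_{41}z_{12}z_{23}z_{34} + z_{21}z_{14}z_{32}z_{43} + z_{31}z_{12}z_{24}z_{43} − z_{23}z_{42}z_{31}z_{14} + z_{41}z_{13}z_{24}z_{32} and p_2 = −z_{41}z_{13}z_{21}z_{14}z_{32} − z_{41}z_{13}z_{31}z_{12}z_{24} − z_{21}z_{12}z_{43}z_{31}z_{14} + z_{21}z_{12}z_{41}z_{13}z_{34} + z_{21}z_{13}z_{42}z_{31}z_{14} + z_{41}z_{12}z_{23}z_{31}z_{14}. Then z_{43}·p lies in I_3(Z), and hence (since I_3(Z) is prime and z_{43} ∉ I_3(Z)) p ∈ I_3(Z). -/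
open MvPolynomial

/-- The variable `z_{(i+1)(j+1)}` of the `4 × 4` matrix of variables (`0`-based indices). -/
noncomputable def z (k : Type*) [Field k] (i j : Fin 4) : MvPolynomial (Fin 4 × Fin 4) k :=
  X (i, j)

/-- `p₁`, the coefficient of `z₁₁` in the circuit polynomial `p`. -/
noncomputable def pOne (k : Type*) [Field k] : MvPolynomial (Fin 4 × Fin 4) k :=
  - z k 1 0 * z k 0 2 * z k 3 1 * z k 2 3
  - z k 3 0 * z k 0 1 * z k 1 2 * z k 2 3
  + z k 1 0 * z k 0 3 * z k 2 1 * z k 3 2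
  + z k 2 0 * z k 0 1 * z k 1 3 * z k 3 2
  - z k 1 2 * z k 3 1 * z k 2 0 * z k 0 3
  + z k 3 0 * z k 0 2 * z k 1 3 * z k 2 1

/-- `p₂`, the constant term (in `z₁₁`) of the circuit polynomial `p`. -/
noncomputable def pTwo (k : Type*) [Field k] : MvPolynomial (Fin 4 × Fin 4) k :=
  - z k 3 0 * z k 0 2 * z k 1 0 * z k 0 3 * z k 2 1
  - z k 3 0 * z k 0 2 * z k 2 0 * z k 0 1 * z k 1 3
  - z k 1 0 * z k 0 1 * z k 3 2 * z k 2 0 * z k 0 3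
  + z k 1 0 * z k 0 1 * z k 3 0 * z k 0 2 * z k 2 3
  + z k 1 0 * z k 0 2 * z k 3 1 * z k 2 0 * z k 0 3
  + z k 3 0 * z k 0 1 * z k 1 2 * z k 2 0 * z k 0 3

/-- The circuit polynomial `p`, quadratic in `z₁₁`. -/
noncomputable def pCircuit (k : Type*) [Field k] : MvPolynomial (Fin 4 × Fin 4) k :=
  (z k 0 0) ^ 2 * (z k 1 2 * z k 3 1 * z k 2 3 - z k 1 3 * z k 2 1 * z k 3 2)
  + z k 0 0 * pOne k + pTwo k

private lemma minor_mem {k : Type*} [Field k] (f g : Fin 3 → Fin 4)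
    (hf : Function.Injective f) (hg : Function.Injective g) :
    (Matrix.of fun i j => (X (f i, g j) : MvPolynomial (Fin 4 × Fin 4) k)).det
      ∈ detIdeal k 4 4 2 :=
  Ideal.subset_span ⟨f, g, hf, hg, rfl⟩

private lemma pCircuit_mem {k : Type*} [Field k] : pCircuit k ∈ detIdeal k 4 4 2 := by
  have h1 := minor_mem (k := k) ![0, 1, 2] ![0, 2, 3] (by decide) (by decide)
  have h2 := minor_mem (k := k) ![0, 2, 3] ![0, 1, 2] (by decide) (by decide)
  have key : pCircuit k =
      (z k 0 0 * z k 3 1 - z k 0 1 * z k 3 0) *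
        (Matrix.of fun i j =>
          (X (![0, 1, 2] i, ![0, 2, 3] j) : MvPolynomial (Fin 4 × Fin 4) k)).det
      + (z k 0 3 * z k 1 0 - z k 0 0 * z k 1 3) *
        (Matrix.of fun i j =>
          (X (![0, 2, 3] i, ![0, 1, 2] j) : MvPolynomial (Fin 4 × Fin 4) k)).det := by
    rw [Matrix.det_fin_three, Matrix.det_fin_three]
    simp only [Matrix.of_apply, Matrix.cons_val', Matrix.cons_val_zero, Matrix.cons_val_one,
      Matrix.head_cons, Matrix.cons_val_two, Matrix.tail_cons, Matrix.head_fin_const,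
      Matrix.empty_val', Matrix.cons_val_fin_one]
    unfold pCircuit pOne pTwo z
    ring
  rw [key]
  exact Ideal.add_mem _ (Ideal.mul_mem_left _ _ h1) (Ideal.mul_mem_left _ _ h2)

/-- `z₄₃ · p` lies in the ideal `I₃(Z)` of `3`-minors of the `4 × 4` matrix of variables,
and hence (since `I₃(Z)` is prime and `z₄₃ ∉ I₃(Z)`) so does `p`. -/
theorem circuitPoly_mem {k : Type*} [Field k] :
    z k 3 2 * pCircuit k ∈ detIdeal k 4 4 2 ∧ pCircuit k ∈ detIdeal k 4 4 2 := by
  exact ⟨Ideal.mul_mem_left _ _ pCircuit_mem, pCircuit_mem⟩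
end
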